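/- arXiv:2102.08478 — 3 statements merged into one kernel-verified Lean document; each statement's English description precedes it below -/
import Mathlib

section
/- Let 0 < a < 1 and b ∈ ℝ, and let k_0 be sufficiently large. Then the sequence v_k = (log(k+k_0))^a (log log(k+k_0))^b satisfies: v_{k+1} − v_k ≪ log v_k, and for every t ≥ 0, Σ_{k : v_k ≥ h(t)} (v_k − v_{k−1})²/(v_k log v_k) ≪ log(t+1)/t, where h(t) = log(t+1)·log log(t+e). The same two conditions hold for v_k = log(k+k_0)·(log log(k+k_0))^b when b ≤ 1. -/
open Real Filter Finset Topology

lemma hasSum_tail (c : ℝ) (hc : 0 ≤ c) (m : ℕ) (hm : 1 ≤ m) :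
    HasSum (fun n : ℕ => if m ≤ n then c * ((n:ℝ)⁻¹ - ((n:ℝ)+1)⁻¹) else 0)
      (c * (m:ℝ)⁻¹) := by
  set F : ℕ → ℝ := fun n => c * ((max m n : ℕ):ℝ)⁻¹ with hF
  have hFn : ∀ n : ℕ, (if m ≤ n then c * ((n:ℝ)⁻¹ - ((n:ℝ)+1)⁻¹) else 0) = F n - F (n+1) := by
    intro n
    by_cases h : m ≤ n
    · simp only [hF, if_pos h, max_eq_right h, max_eq_right (h.trans (Nat.le_succ n))]
      push_cast
      ring
    · have h1 : max m n = m := max_eq_left (le_of_not_ge h)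
      have h2 : max m (n+1) = m := max_eq_left (Nat.succ_le_of_lt (lt_of_not_ge h))
      rw [if_neg h, hF]
      simp only [h1, h2, sub_self]
  have hnonneg : ∀ n : ℕ, 0 ≤ (if m ≤ n then c * ((n:ℝ)⁻¹ - ((n:ℝ)+1)⁻¹) else 0) := by
    intro n
    by_cases h : m ≤ n
    · rw [if_pos h]
      have hn1 : (1:ℝ) ≤ (n:ℝ) := by exact_mod_cast hm.trans h
      have h2 : ((n:ℝ)+1)⁻¹ ≤ (n:ℝ)⁻¹ := by
        apply inv_anti₀ (by linarith) (by linarith)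
      exact mul_nonneg hc (by linarith)
    · rw [if_neg h]
  rw [hasSum_iff_tendsto_nat_of_nonneg hnonneg]
  have hsum : ∀ n : ℕ, (∑ i ∈ Finset.range n,
      (if m ≤ i then c * ((i:ℝ)⁻¹ - ((i:ℝ)+1)⁻¹) else 0)) = F 0 - F n := by
    intro n
    rw [Finset.sum_congr rfl (fun i _ => hFn i)]
    exact Finset.sum_range_sub' F n
  have hF0 : F 0 = c * (m:ℝ)⁻¹ := by simp [hF]
  have hFlim : Tendsto F atTop (𝓝 0) := by
    have h0 : Tendsto (fun n : ℕ => c / (n:ℝ)) atTop (𝓝 0) :=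
      tendsto_const_div_atTop_nhds_zero_nat c
    apply h0.congr'
    filter_upwards [eventually_ge_atTop m] with n hn
    rw [hF]
    simp only [max_eq_right hn, div_eq_mul_inv]
  have hlim : Tendsto (fun n : ℕ => F 0 - F n) atTop (𝓝 (c * (m:ℝ)⁻¹)) := by
    rw [← hF0]
    simpa using (tendsto_const_nhds).sub hFlim
  exact hlim.congr (fun n => (hsum n).symm)

lemma aux_ev (c d K : ℝ) (hd : 0 < d) (hc : 0 ≤ c) (hK : 0 ≤ K) :
    ∀ᶠ x : ℝ in atTop, K * (log (log x)) ^ c ≤ (log x) ^ d := by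
  set ε : ℝ := d / (2 * (c + 1)) with hε
  have hεpos : 0 < ε := by positivity
  have hlog1 : ∀ᶠ x : ℝ in atTop, 1 ≤ log x := tendsto_log_atTop.eventually_ge_atTop 1
  have hbig : ∀ᶠ x : ℝ in atTop, K / ε ^ c ≤ (log x) ^ (d/2) :=
    ((tendsto_rpow_atTop (by linarith : (0:ℝ) < d/2)).comp
      tendsto_log_atTop).eventually_ge_atTop (K / ε ^ c)
  filter_upwards [hlog1, hbig] with x h1 h2
  have hlx : (0:ℝ) < log x := lt_of_lt_of_le one_pos h1
  have hll : log (log x) ≤ (log x) ^ ε / ε := log_le_rpow_div hlx.le hεpos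
  have hll0 : 0 ≤ log (log x) := log_nonneg h1
  have step1 : (log (log x)) ^ c ≤ ((log x) ^ ε / ε) ^ c :=
    rpow_le_rpow hll0 hll hc
  have step2 : ((log x) ^ ε / ε) ^ c = (log x) ^ (ε * c) / ε ^ c := by
    rw [div_rpow (rpow_nonneg hlx.le ε) hεpos.le, ← rpow_mul hlx.le]
  have hεc : ε * c ≤ d / 2 := by
    rw [hε]
    rw [div_mul_eq_mul_div, div_le_div_iff₀ (by positivity) (by norm_num)]
    nlinarith
  have step3 : (log x) ^ (ε * c) ≤ (log x) ^ (d/2) :=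
    rpow_le_rpow_of_exponent_le h1 hεc
  have key : K * (log (log x)) ^ c ≤ (K / ε ^ c) * (log x) ^ (d/2) := by
    calc K * (log (log x)) ^ c ≤ K * ((log x) ^ (ε*c) / ε ^ c) := by
          apply mul_le_mul_of_nonneg_left _ hK
          rw [← step2]; exact step1
      _ = (K / ε ^ c) * (log x) ^ (ε*c) := by ring
      _ ≤ (K / ε ^ c) * (log x) ^ (d/2) := by
          apply mul_le_mul_of_nonneg_left step3
          positivity
  calc K * (log (log x)) ^ c ≤ (K / ε ^ c) * (log x) ^ (d/2) := key
    _ ≤ (log x) ^ (d/2) * (log x) ^ (d/2) := by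
        apply mul_le_mul_of_nonneg_right h2 (rpow_nonneg hlx.le _)
    _ = (log x) ^ d := by rw [← rpow_add hlx]; norm_num

lemma rpow_diff_le (p C y x : ℝ) (hy : 0 < y) (hyx : y ≤ x)
    (hC : ∀ t ∈ Set.Icc y x, |p| * t ^ (p-1) ≤ C) : |x ^ p - y ^ p| ≤ C * (x - y) := by
  have h := Convex.norm_image_sub_le_of_norm_hasDerivWithin_le
    (f := fun t : ℝ => t ^ p) (f' := fun t : ℝ => p * t ^ (p-1)) (s := Set.Icc y x)
    (fun t ht => (hasDerivAt_rpow_const (Or.inl (ne_of_gt (lt_of_lt_of_le hy ht.1)))).hasDerivWithinAt)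
    (fun t ht => by
      have htpos : 0 < t := lt_of_lt_of_le hy ht.1
      rw [Real.norm_eq_abs, abs_mul, abs_of_nonneg (rpow_nonneg htpos.le _)]
      exact hC t ht)
    (convex_Icc y x) (Set.left_mem_Icc.mpr hyx) (Set.right_mem_Icc.mpr hyx)
  rw [Real.norm_eq_abs, Real.norm_eq_abs, abs_of_nonneg (by linarith : (0:ℝ) ≤ x - y)] at h
  exact h

lemma master (v : ℕ → ℝ) (C₂ C₃ T : ℝ) (hC₂0 : 0 ≤ C₂) (hC₃0 : 0 ≤ C₃) (hT : 2 ≤ T)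
    (he : ∀ k : ℕ, Real.exp 1 ≤ v k)
    (h2 : ∀ k : ℕ, 1 ≤ k → v (k+1) - v k ≤ C₂)
    (h3 : ∀ k : ℕ, 1 ≤ k → (v k - v (k-1))^2 / (v k * Real.log (v k)) ≤ C₃ / (k:ℝ)^2)
    (hthr : ∀ t : ℝ, T ≤ t → ∀ k : ℕ, 1 ≤ k →
        Real.log (t+1) * Real.log (Real.log (t + Real.exp 1)) ≤ v k → t ≤ 2 * k) :
    (∃ C : ℝ, ∀ k : ℕ, 1 ≤ k → v (k + 1) - v k ≤ C * Real.log (v k)) ∧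
    (∃ C : ℝ, ∀ t : ℝ, 0 < t →
      Summable (fun k : {k : ℕ // 1 ≤ k ∧
          Real.log (t + 1) * Real.log (Real.log (t + Real.exp 1)) ≤ v k} =>
        (v k - v ((k : ℕ) - 1)) ^ 2 / (v k * Real.log (v k))) ∧
      (∑' k : {k : ℕ // 1 ≤ k ∧
          Real.log (t + 1) * Real.log (Real.log (t + Real.exp 1)) ≤ v k},
        (v k - v ((k : ℕ) - 1)) ^ 2 / (v k * Real.log (v k))) ≤
        C * Real.log (t + 1) / t) := by
  have hvpos : ∀ k : ℕ, 0 < v k := fun k => lt_of_lt_of_le (exp_pos 1) (he k)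
  have hlog1 : ∀ k : ℕ, 1 ≤ Real.log (v k) := by
    intro k
    have := Real.log_le_log (exp_pos 1) (he k)
    rwa [Real.log_exp] at this
  constructor
  · refine ⟨C₂, fun k hk => ?_⟩
    calc v (k+1) - v k ≤ C₂ := h2 k hk
      _ = C₂ * 1 := (mul_one C₂).symm
      _ ≤ C₂ * Real.log (v k) := mul_le_mul_of_nonneg_left (hlog1 k) hC₂0
  · -- the sum part
    have hw : Summable (fun n : ℕ => C₃ / (n:ℝ)^2) := by
      have h0 : Summable (fun n : ℕ => 1 / (n:ℝ)^2) :=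
        Real.summable_one_div_nat_pow.mpr one_lt_two
      have := h0.mul_left C₃
      refine this.congr (fun n => ?_)
      rw [mul_one_div]
    set Z : ℝ := ∑' n : ℕ, C₃ / (n:ℝ)^2 with hZ
    have hZ0 : 0 ≤ Z := tsum_nonneg (fun n => by positivity)
    refine ⟨Z * (T+1) + 4 * C₃, fun t ht => ?_⟩
    set u : {k : ℕ // 1 ≤ k ∧
        Real.log (t + 1) * Real.log (Real.log (t + Real.exp 1)) ≤ v k} → ℝ :=
      fun k => (v k - v ((k : ℕ) - 1)) ^ 2 / (v k * Real.log (v k)) with hu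
    have hu0 : ∀ k, 0 ≤ u k := by
      intro k
      have h1 := hvpos (k:ℕ)
      have h2' := hlog1 (k:ℕ)
      have : 0 < v (k:ℕ) * Real.log (v (k:ℕ)) := mul_pos h1 (by linarith)
      positivity
    have hub : ∀ k, u k ≤ C₃ / ((k:ℕ):ℝ)^2 := fun k => h3 (k:ℕ) k.2.1
    have husum : Summable u := by
      apply Summable.of_nonneg_of_le hu0 hub
      exact hw.comp_injective Subtype.val_injective
    refine ⟨husum, ?_⟩
    have hlogt : 0 < Real.log (t+1) := Real.log_pos (by linarith)
    have hltnn : 0 ≤ Real.log (t+1) / t := le_of_lt (by positivity)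
    by_cases hcase : t ≤ T
    · -- small t : bound by the full sum Z
      have hZle : ∑' k, u k ≤ Z :=
        Summable.tsum_le_tsum_of_inj (Subtype.val) Subtype.val_injective
          (fun n _ => div_nonneg hC₃0 (by positivity)) hub husum hw
      have hloglb : t / (t+1) ≤ Real.log (t+1) := by
        have h01 : (0:ℝ) < (t+1)⁻¹ := by positivity
        have := Real.log_le_sub_one_of_pos h01
        rw [Real.log_inv] at this
        have ht1 : (t+1)⁻¹ - 1 = -(t/(t+1)) := by field_simp; ring
        linarith [this.trans_eq ht1]
      have hfrac : 1 / (T+1) ≤ Real.log (t+1) / t := by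
        rw [div_le_div_iff₀ (by linarith) ht]
        have h1 : t / (t+1) * (t+1) = t := by field_simp
        calc 1 * t = t := one_mul t
          _ = t / (t+1) * (t+1) := h1.symm
          _ ≤ Real.log (t+1) * (t+1) := by
              apply mul_le_mul_of_nonneg_right hloglb (by linarith)
          _ ≤ Real.log (t+1) * (T+1) := by
              apply mul_le_mul_of_nonneg_left (by linarith) hlogt.le
      calc ∑' k, u k ≤ Z := hZle
        _ = Z * (T+1) * (1/(T+1)) := by field_simp
        _ ≤ Z * (T+1) * (Real.log (t+1) / t) := by
            apply mul_le_mul_of_nonneg_left hfrac (by positivity)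
        _ ≤ (Z * (T+1) + 4 * C₃) * Real.log (t+1) / t := by
            rw [mul_div_assoc]
            apply mul_le_mul_of_nonneg_right _ hltnn
            linarith
    · -- large t
      push_neg at hcase
      set m : ℕ := ⌈t/2⌉₊ with hm
      have hm1 : 1 ≤ m := Nat.one_le_iff_ne_zero.mpr (by
        simp only [hm, ne_eq, Nat.ceil_eq_zero, not_le]
        linarith)
      have hmt : t/2 ≤ (m:ℝ) := Nat.le_ceil _
      set g : ℕ → ℝ := fun n => if m ≤ n then 2*C₃ * ((n:ℝ)⁻¹ - ((n:ℝ)+1)⁻¹) else 0 with hg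
      have hgsum : HasSum g (2*C₃ * (m:ℝ)⁻¹) := hasSum_tail (2*C₃) (by linarith) m hm1
      have hule : ∀ k, u k ≤ g (k:ℕ) := by
        intro k
        obtain ⟨hk1, hkv⟩ := k.2
        have htk : t ≤ 2 * (k:ℕ) := hthr t hcase.le (k:ℕ) hk1 hkv
        have hmk : m ≤ (k:ℕ) := Nat.ceil_le.mpr (by
          push_cast
          linarith)
        have hkr : (1:ℝ) ≤ ((k:ℕ):ℝ) := by exact_mod_cast hk1
        rw [hg]
        simp only [if_pos hmk]
        have hinv : ((k:ℕ):ℝ)⁻¹ - (((k:ℕ):ℝ)+1)⁻¹ = (((k:ℕ):ℝ) * (((k:ℕ):ℝ)+1))⁻¹ := by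
          rw [inv_sub_inv (by linarith) (by linarith)]
          ring_nf
        rw [hinv]
        calc u k ≤ C₃ / ((k:ℕ):ℝ)^2 := hub k
          _ ≤ 2*C₃ * (((k:ℕ):ℝ) * (((k:ℕ):ℝ)+1))⁻¹ := by
              rw [← div_eq_mul_inv, div_le_div_iff₀ (by positivity) (by positivity)]
              nlinarith [mul_nonneg (mul_nonneg hC₃0
                (by linarith : (0:ℝ) ≤ ((k:ℕ):ℝ)-1)) (by linarith : (0:ℝ) ≤ ((k:ℕ):ℝ))]
      have htsumle : ∑' k, u k ≤ 2*C₃ * (m:ℝ)⁻¹ := by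
        rw [← hgsum.tsum_eq]
        refine Summable.tsum_le_tsum_of_inj (Subtype.val) Subtype.val_injective
          (fun n _ => ?_) hule husum hgsum.summable
        by_cases hmn : m ≤ n
        · simp only [hg, if_pos hmn]
          have hn1 : (1:ℝ) ≤ (n:ℝ) := by exact_mod_cast hm1.trans hmn
          have : ((n:ℝ)+1)⁻¹ ≤ (n:ℝ)⁻¹ := inv_anti₀ (by linarith) (by linarith)
          have h2C : (0:ℝ) ≤ 2*C₃ := by linarith
          nlinarith
        · simp [hg, if_neg hmn]
      have hlog1t : 1 ≤ Real.log (t+1) := by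
        have h3le : Real.exp 1 ≤ t + 1 := by
          have := Real.exp_one_lt_d9
          linarith
        have := Real.log_le_log (exp_pos 1) h3le
        rwa [Real.log_exp] at this
      calc ∑' k, u k ≤ 2*C₃ * (m:ℝ)⁻¹ := htsumle
        _ ≤ 2*C₃ * (2/t) := by
            apply mul_le_mul_of_nonneg_left _ (by linarith : (0:ℝ) ≤ 2*C₃)
            have h1 : ((m:ℝ))⁻¹ ≤ (t/2)⁻¹ := inv_anti₀ (by positivity) hmt
            rwa [inv_div] at h1
        _ = 4*C₃ / t := by ring
        _ ≤ (Z * (T+1) + 4 * C₃) * Real.log (t+1) / t := by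
            rw [div_le_div_iff₀ ht ht]
            have hZT : (0:ℝ) ≤ Z * (T+1) := mul_nonneg hZ0 (by linarith)
            have hbig : 4 * C₃ ≤ (Z * (T+1) + 4 * C₃) * Real.log (t+1) := by
              nlinarith [mul_nonneg (by linarith : (0:ℝ) ≤ Z*(T+1) + 4*C₃)
                (by linarith : (0:ℝ) ≤ Real.log (t+1) - 1)]
            nlinarith [mul_le_mul_of_nonneg_right hbig ht.le]

set_option maxHeartbeats 2000000 in
lemma inst (a b : ℝ) (ha0 : 0 < a) (ha1 : a ≤ 1) (hab : a < 1 ∨ b ≤ 1) :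
    ∃ N : ℕ, ∀ k₀ : ℕ, N ≤ k₀ →
      ∀ v : ℕ → ℝ,
        (∀ k : ℕ, v k = Real.log (k + k₀ : ℝ) ^ a *
          Real.log (Real.log (k + k₀ : ℝ)) ^ b) →
        (∃ C : ℝ, ∀ k : ℕ, 1 ≤ k → v (k + 1) - v k ≤ C * Real.log (v k)) ∧
        (∃ C : ℝ, ∀ t : ℝ, 0 < t →
          Summable (fun k : {k : ℕ // 1 ≤ k ∧
              Real.log (t + 1) * Real.log (Real.log (t + Real.exp 1)) ≤ v k} =>
            (v k - v ((k : ℕ) - 1)) ^ 2 / (v k * Real.log (v k))) ∧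
          (∑' k : {k : ℕ // 1 ≤ k ∧
              Real.log (t + 1) * Real.log (Real.log (t + Real.exp 1)) ≤ v k},
            (v k - v ((k : ℕ) - 1)) ^ 2 / (v k * Real.log (v k))) ≤
            C * Real.log (t + 1) / t) := by
  set B := |b| with hB
  have hB0 : 0 ≤ B := abs_nonneg b
  have hbB : b ≤ B := le_abs_self b
  have hbB' : -B ≤ b := neg_abs_le b
  -- eventual facts
  have hE4 : ∀ᶠ x : ℝ in atTop, log x ≤ 2 * log (x - 1) := by
    filter_upwards [eventually_ge_atTop (4:ℝ)] with x hx
    have hs2 : (2:ℝ) ≤ sqrt x := by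
      rw [show (2:ℝ) = sqrt 4 by rw [show (4:ℝ) = 2^2 by norm_num, Real.sqrt_sq (by norm_num)]]
      exact Real.sqrt_le_sqrt hx
    have hsx : sqrt x ≤ x - 1 := by
      have h1 : sqrt x * sqrt x = x := Real.mul_self_sqrt (by linarith)
      nlinarith
    have := Real.log_le_log (by positivity) hsx
    rw [Real.log_sqrt (by linarith)] at this
    linarith
  have hE1 : ∀ᶠ x : ℝ in atTop, 1 ≤ log (log x) :=
    (tendsto_log_atTop.comp tendsto_log_atTop).eventually_ge_atTop 1
  have hE2 := aux_ev (3*B) 1 (4*(1+B)^2) one_pos (by linarith) (by positivity)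
  have hE3 := aux_ev B a (exp 1) ha0 hB0 (exp_pos 1).le
  obtain ⟨N₀, hN₀⟩ := eventually_atTop.mp
    ((((hE1.and hE2).and hE3).and hE4).and (eventually_ge_atTop (4:ℝ)))
  refine ⟨⌈N₀⌉₊ + 1, fun k₀ hk₀ v hv => ?_⟩
  set N : ℕ := ⌈N₀⌉₊ + 1 with hN
  have hk₀1 : 1 ≤ k₀ := le_trans (Nat.le_add_left 1 _) hk₀
  -- packaged facts for x ≥ N
  have hfacts : ∀ x : ℝ, (N:ℝ) ≤ x →
      (1 ≤ log (log x) ∧ 4*(1+B)^2 * (log (log x))^(3*B) ≤ log x ∧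
       exp 1 * (log (log x))^B ≤ (log x)^a ∧ log x ≤ 2 * log (x - 1) ∧
       exp 1 ≤ log x ∧ 4 ≤ x) := by
    intro x hx
    have hxN₀ : N₀ ≤ x := by
      calc N₀ ≤ (⌈N₀⌉₊ : ℝ) := Nat.le_ceil N₀
        _ ≤ (N:ℝ) := by rw [hN]; push_cast; linarith
        _ ≤ x := hx
    obtain ⟨⟨⟨⟨h1, h2⟩, h3⟩, h4⟩, hx4⟩ := hN₀ x hxN₀
    rw [Real.rpow_one] at h2
    have hlogpos : 0 < log x := Real.log_pos (by linarith)
    have helog : exp 1 ≤ log x := by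
      rw [← Real.le_log_iff_exp_le hlogpos]
      exact h1
    exact ⟨h1, h2, h3, h4, helog, hx4⟩
  have hxk : ∀ k : ℕ, (N:ℝ) ≤ (k:ℝ) + (k₀:ℝ) := by
    intro k
    have h1 : (N:ℝ) ≤ (k₀:ℝ) := by exact_mod_cast hk₀
    have h2 : (0:ℝ) ≤ (k:ℝ) := Nat.cast_nonneg k
    linarith
  -- log (v k) ≥ 1 via exp 1 ≤ v k
  have he : ∀ k : ℕ, exp 1 ≤ v k := by
    intro k
    rw [hv k]
    set x : ℝ := (k:ℝ) + (k₀:ℝ) with hx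
    obtain ⟨hℓ1, -, h3, -, hL, hx4⟩ := hfacts x (hxk k)
    have hL1 : (1:ℝ) ≤ log x := by
      have := Real.exp_one_gt_d9; linarith
    have hℓ0 : (0:ℝ) ≤ log (log x) := by linarith
    have hQpos : (0:ℝ) < log (log x) ^ B := rpow_pos_of_pos (by linarith) B
    have hstep : exp 1 ≤ log x ^ a * log (log x) ^ (-B) := by
      rw [Real.rpow_neg hℓ0, ← div_eq_mul_inv, le_div_iff₀ hQpos]
      exact h3
    refine hstep.trans ?_
    apply mul_le_mul_of_nonneg_left _ (rpow_nonneg (by linarith) a)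
    exact rpow_le_rpow_of_exponent_le hℓ1 hbB'
  -- the increment bound
  have hdelta : ∀ k : ℕ, 1 ≤ k →
      |v k - v (k-1)| ≤ (1+B) * ((log (log ((k:ℝ)+(k₀:ℝ))))^B *
        (log ((k:ℝ)+(k₀:ℝ)-1))^(a-1)) / k := by
    intro k hk1
    set x : ℝ := (k:ℝ) + (k₀:ℝ) with hxdef
    have hcast : ((k-1:ℕ):ℝ) + (k₀:ℝ) = x - 1 := by
      rw [Nat.cast_sub hk1]
      push_cast
      ring
    have hvk1 : v (k-1) = log (x-1) ^ a * log (log (x-1)) ^ b := by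
      rw [hv (k-1), hcast]
    obtain ⟨hℓx1, hE2x, -, hE4x, hLxe, hx4⟩ := hfacts x (hxk k)
    obtain ⟨hℓy1, -, -, -, hLye, hy4⟩ := hfacts (x-1) (by rw [← hcast]; exact hxk (k-1))
    set Lx := log x with hLx
    set Ly := log (x-1) with hLy
    set ℓx := log Lx with hℓx
    set ℓy := log Ly with hℓy
    have hexp1 : (1:ℝ) ≤ exp 1 := Real.one_le_exp (by norm_num)
    have hLy1 : (1:ℝ) ≤ Ly := hexp1.trans hLye
    have hLx1 : (1:ℝ) ≤ Lx := hexp1.trans hLxe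
    have hLypos : (0:ℝ) < Ly := by linarith
    have hkpos : (0:ℝ) < (k:ℝ) := by exact_mod_cast hk1
    have hkx : (k:ℝ) ≤ x - 1 := by
      have h1 : (1:ℝ) ≤ (k₀:ℝ) := by exact_mod_cast hk₀1
      rw [hxdef]; linarith
    have hLyx : Ly ≤ Lx := Real.log_le_log (by linarith) (by linarith)
    have hℓyx : ℓy ≤ ℓx := Real.log_le_log hLypos hLyx
    have hℓy0 : (0:ℝ) ≤ ℓy := by linarith
    -- log increment
    have hΔL : Lx - Ly ≤ 1/(k:ℝ) := by
      have hxm1 : (0:ℝ) < x - 1 := by linarith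
      have hd : Lx - Ly = log (x/(x-1)) := by
        rw [hLx, hLy, Real.log_div (by linarith) (by linarith)]
      have hq : log (x/(x-1)) ≤ x/(x-1) - 1 :=
        Real.log_le_sub_one_of_pos (by positivity)
      have he2 : x/(x-1) - 1 = 1/(x-1) := by field_simp; ring
      have he3 : 1/(x-1) ≤ 1/(k:ℝ) := one_div_le_one_div_of_le hkpos hkx
      rw [hd]
      linarith
    have hΔL0 : 0 ≤ Lx - Ly := by linarith
    have hΔℓ : ℓx - ℓy ≤ (1/(k:ℝ))/Ly := by
      have hd : ℓx - ℓy = log (Lx/Ly) := by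
        rw [hℓx, hℓy, Real.log_div (by linarith) (by linarith)]
      have hq : log (Lx/Ly) ≤ Lx/Ly - 1 := Real.log_le_sub_one_of_pos (by positivity)
      have he2 : Lx/Ly - 1 = (Lx - Ly)/Ly := by field_simp
      have he3 : (Lx - Ly)/Ly ≤ (1/(k:ℝ))/Ly := (div_le_div_iff_of_pos_right hLypos).mpr hΔL
      rw [hd]
      calc log (Lx/Ly) ≤ Lx/Ly - 1 := hq
        _ = (Lx - Ly)/Ly := he2
        _ ≤ (1/(k:ℝ))/Ly := he3
    have hΔℓ0 : 0 ≤ ℓx - ℓy := by linarith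
    set P := Ly ^ (a-1) with hP
    set Q := ℓx ^ B with hQ
    have hP0 : (0:ℝ) ≤ P := rpow_nonneg (by linarith) _
    have hQ1 : (1:ℝ) ≤ Q := Real.one_le_rpow hℓx1 hB0
    have hQ0 : (0:ℝ) ≤ Q := by linarith
    -- rpow difference bounds
    have hTermL : |Lx ^ a - Ly ^ a| ≤ (a * P) * (Lx - Ly) := by
      apply rpow_diff_le a _ Ly Lx hLypos hLyx
      intro s hs
      rw [abs_of_pos ha0, hP]
      apply mul_le_mul_of_nonneg_left _ ha0.le
      exact Real.rpow_le_rpow_of_nonpos hLypos hs.1 (by linarith)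
    have hTermℓ : |ℓx ^ b - ℓy ^ b| ≤ (B * Q) * (ℓx - ℓy) := by
      apply rpow_diff_le b _ ℓy ℓx (by linarith) hℓyx
      intro s hs
      rw [hB, hQ]
      apply mul_le_mul_of_nonneg_left _ (abs_nonneg b)
      have hs1 : (1:ℝ) ≤ s := le_trans hℓy1 hs.1
      calc s ^ (b-1) ≤ s ^ B := rpow_le_rpow_of_exponent_le hs1 (by
            rw [hB]; have := le_abs_self b; linarith)
        _ ≤ ℓx ^ B := rpow_le_rpow (by linarith) hs.2 hB0
    -- algebraic identity
    have hid : v k - v (k-1) = (Lx ^ a - Ly ^ a) * ℓx ^ b + Ly ^ a * (ℓx ^ b - ℓy ^ b) := by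
      rw [hv k, hvk1]
      ring
    have hℓxb0 : (0:ℝ) ≤ ℓx ^ b := rpow_nonneg (by linarith) b
    have hℓxbQ : ℓx ^ b ≤ Q := rpow_le_rpow_of_exponent_le hℓx1 hbB
    have hLya0 : (0:ℝ) ≤ Ly ^ a := rpow_nonneg (by linarith) a
    have hTermA : |Lx ^ a - Ly ^ a| * ℓx ^ b ≤ a * P * (1/(k:ℝ)) * Q := by
      calc |Lx ^ a - Ly ^ a| * ℓx ^ b ≤ ((a * P) * (Lx - Ly)) * Q := by
            apply mul_le_mul hTermL hℓxbQ hℓxb0 (by positivity)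
        _ ≤ ((a * P) * (1/(k:ℝ))) * Q := by
            apply mul_le_mul_of_nonneg_right _ hQ0
            exact mul_le_mul_of_nonneg_left hΔL (by positivity)
        _ = a * P * (1/(k:ℝ)) * Q := by ring
    have hTermB : Ly ^ a * |ℓx ^ b - ℓy ^ b| ≤ B * Q * (1/(k:ℝ)) * P := by
      have h1 : Ly ^ a * |ℓx ^ b - ℓy ^ b| ≤ Ly ^ a * ((B * Q) * ((1/(k:ℝ))/Ly)) := by
        apply mul_le_mul_of_nonneg_left _ hLya0
        calc |ℓx ^ b - ℓy ^ b| ≤ (B * Q) * (ℓx - ℓy) := hTermℓ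
          _ ≤ (B * Q) * ((1/(k:ℝ))/Ly) := by
              apply mul_le_mul_of_nonneg_left hΔℓ (by positivity)
      have h2 : Ly ^ a * ((B * Q) * ((1/(k:ℝ))/Ly)) = B * Q * (1/(k:ℝ)) * (Ly ^ a / Ly) := by
        ring
      have h3 : Ly ^ a / Ly = P := by
        rw [hP, Real.rpow_sub_one (ne_of_gt hLypos)]
      rw [h2, h3] at h1
      exact h1
    calc |v k - v (k-1)| ≤ |Lx ^ a - Ly ^ a| * ℓx ^ b + Ly ^ a * |ℓx ^ b - ℓy ^ b| := by
          rw [hid]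
          refine (abs_add_le _ _).trans ?_
          rw [abs_mul, abs_mul, abs_of_nonneg hℓxb0, abs_of_nonneg hLya0]
        _ ≤ a * P * (1/(k:ℝ)) * Q + B * Q * (1/(k:ℝ)) * P := add_le_add hTermA hTermB
        _ = (a + B) * (Q * P) * (1/(k:ℝ)) := by ring
        _ ≤ (1+B) * (Q * P) * (1/(k:ℝ)) := by
          apply mul_le_mul_of_nonneg_right _ (by positivity)
          apply mul_le_mul_of_nonneg_right (by linarith) (mul_nonneg hQ0 hP0)
        _ = (1+B) * (Q * P) / k := by ring
  
  -- thresholds and final assembly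
  have hlog1v : ∀ k : ℕ, 1 ≤ Real.log (v k) := by
    intro k
    have := Real.log_le_log (exp_pos 1) (he k)
    rwa [Real.log_exp] at this
  have h3 : ∀ k : ℕ, 1 ≤ k → (v k - v (k-1))^2 / (v k * Real.log (v k)) ≤ 1 / (k:ℝ)^2 := by
    intro k hk1
    set x : ℝ := (k:ℝ) + (k₀:ℝ) with hxdef
    obtain ⟨hℓx1, hE2x, -, hE4x, hLxe, hx4⟩ := hfacts x (hxk k)
    have hcast : ((k-1:ℕ):ℝ) + (k₀:ℝ) = x - 1 := by
      rw [Nat.cast_sub hk1]; push_cast; ring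
    obtain ⟨hℓy1, -, -, -, hLye, hy4⟩ := hfacts (x-1) (by rw [← hcast]; exact hxk (k-1))
    set Lx := log x with hLx
    set Ly := log (x-1) with hLy
    set ℓx := log Lx with hℓx
    have hexp1 : (1:ℝ) ≤ exp 1 := Real.one_le_exp (by norm_num)
    have hLy1 : (1:ℝ) ≤ Ly := hexp1.trans hLye
    have hLx1 : (1:ℝ) ≤ Lx := hexp1.trans hLxe
    have hLypos : (0:ℝ) < Ly := by linarith
    have hLxpos : (0:ℝ) < Lx := by linarith
    have hℓxpos : (0:ℝ) < ℓx := by linarith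
    have hkpos : (0:ℝ) < (k:ℝ) := by exact_mod_cast hk1
    set P := Ly ^ (a-1) with hP
    set Q := ℓx ^ B with hQ
    have hP0 : (0:ℝ) ≤ P := rpow_nonneg (by linarith) _
    have hQ0 : (0:ℝ) ≤ Q := rpow_nonneg (by linarith) _
    have hd := hdelta k hk1
    set M := (1+B) * (Q * P) / (k:ℝ) with hM
    have hM0 : 0 ≤ M := by
      rw [hM]; positivity
    have habs := abs_le.mp hd
    have hnum : (v k - v (k-1))^2 ≤ M^2 := sq_le_sq' (by linarith [habs.1]) habs.2
    have hvk : v k = Lx ^ a * ℓx ^ b := hv k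
    have hvpos : 0 < v k := lt_of_lt_of_le (exp_pos 1) (he k)
    have hD0 : (0:ℝ) < Lx ^ a * ℓx ^ (-B) :=
      mul_pos (rpow_pos_of_pos hLxpos a) (rpow_pos_of_pos hℓxpos _)
    have hdenom : Lx ^ a * ℓx ^ (-B) ≤ v k * Real.log (v k) := by
      have h1 : Lx ^ a * ℓx ^ (-B) ≤ v k := by
        rw [hvk]
        apply mul_le_mul_of_nonneg_left _ (rpow_nonneg (by linarith) a)
        exact rpow_le_rpow_of_exponent_le hℓx1 hbB'
      calc Lx ^ a * ℓx ^ (-B) ≤ v k := h1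
        _ ≤ v k * Real.log (v k) := le_mul_of_one_le_right hvpos.le (hlog1v k)
    have hstep : (v k - v (k-1))^2 / (v k * Real.log (v k)) ≤ M^2 / (Lx ^ a * ℓx ^ (-B)) :=
      div_le_div₀ (by positivity) hnum hD0 hdenom
    refine hstep.trans ?_
    rw [div_le_div_iff₀ hD0 (by positivity)]
    have hMk : M^2 * (k:ℝ)^2 = ((1+B)*(Q*P))^2 := by
      rw [hM]
      field_simp
    rw [hMk]
    -- key inequality
    have hℓ3B : Q * Q * ℓx ^ B = ℓx ^ (3*B) := by
      rw [hQ, ← Real.rpow_add hℓxpos, ← Real.rpow_add hℓxpos]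
      congr 1
      ring
    have hPP : P * P = Ly ^ (a-2) * Ly ^ a := by
      rw [hP, ← Real.rpow_add hLypos, ← Real.rpow_add hLypos]
      congr 1
      ring
    have hLya2 : Ly ^ (a-2) ≤ Ly⁻¹ := by
      have : Ly ^ (a-2) ≤ Ly ^ (-1 : ℝ) :=
        rpow_le_rpow_of_exponent_le hLy1 (by linarith)
      rwa [Real.rpow_neg_one] at this
    have hLyax : Ly ^ a ≤ Lx ^ a := rpow_le_rpow (by linarith) (by
      exact Real.log_le_log (by linarith) (by linarith)) ha0.le
    have hB2 : (1+B)^2 * ℓx ^ (3*B) ≤ Ly := by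
      have hLx2Ly : Lx ≤ 2 * Ly := hE4x
      linarith
    have hkey : ((1+B)*(Q*P))^2 * ℓx ^ B ≤ Lx ^ a := by
      have hexpand : ((1+B)*(Q*P))^2 * ℓx ^ B
          = ((1+B)^2 * (Q * Q * ℓx ^ B)) * (P * P) := by ring
      rw [hexpand, hℓ3B, hPP]
      calc (1+B)^2 * ℓx ^ (3*B) * (Ly ^ (a-2) * Ly ^ a)
          ≤ Ly * (Ly⁻¹ * Lx ^ a) := by
            apply mul_le_mul hB2
            · apply mul_le_mul hLya2 hLyax (rpow_nonneg (by linarith) a) (by positivity)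
            · positivity
            · linarith
        _ = Lx ^ a := by
            field_simp
    rw [one_mul]
    have hQBpos : (0:ℝ) < ℓx ^ B := rpow_pos_of_pos hℓxpos B
    rw [Real.rpow_neg (le_of_lt hℓxpos), ← div_eq_mul_inv, le_div_iff₀ hQBpos]
    exact hkey
  
  have h2 : ∀ k : ℕ, 1 ≤ k → v (k+1) - v k ≤ (1+B) * (1+(k₀:ℝ)) := by
    intro k hk1
    have hd := hdelta (k+1) (Nat.le_add_left 1 k)
    have hsimp : (k+1) - 1 = k := by omega
    rw [hsimp] at hd
    have hcast : (((k+1:ℕ)):ℝ) = (k:ℝ)+1 := by push_cast; ring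
    rw [hcast] at hd
    set x : ℝ := (k:ℝ)+1+(k₀:ℝ) with hxdef
    have hxN : (N:ℝ) ≤ x := by
      have := hxk (k+1)
      push_cast at this ⊢
      linarith
    obtain ⟨hℓx1, hE2x, -, -, hLxe, hx4⟩ := hfacts x hxN
    have hyN : (N:ℝ) ≤ x - 1 := by
      have := hxk k
      push_cast at this ⊢
      linarith
    obtain ⟨-, -, -, -, hLye, -⟩ := hfacts (x-1) hyN
    have hexp1 : (1:ℝ) ≤ exp 1 := Real.one_le_exp (by norm_num)
    have hLy1 : (1:ℝ) ≤ log (x-1) := hexp1.trans hLye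
    have hLx1 : (1:ℝ) ≤ log x := hexp1.trans hLxe
    have hℓxpos : (0:ℝ) < log (log x) := by linarith
    have hP1 : log (x-1) ^ (a-1) ≤ 1 :=
      Real.rpow_le_one_of_one_le_of_nonpos hLy1 (by linarith)
    have hP0 : (0:ℝ) ≤ log (x-1) ^ (a-1) := rpow_nonneg (by linarith) _
    have hQle : log (log x) ^ B ≤ x := by
      have h1 : log (log x) ^ B ≤ log (log x) ^ (3*B) :=
        rpow_le_rpow_of_exponent_le hℓx1 (by linarith)
      have h2' : log (log x) ^ (3*B) ≤ log x := by
        have hc : (1:ℝ) ≤ 4*(1+B)^2 := by nlinarith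
        have h3' : (1:ℝ) * log (log x) ^ (3*B) ≤ 4*(1+B)^2 * log (log x) ^ (3*B) :=
          mul_le_mul_of_nonneg_right hc (rpow_nonneg (by linarith) _)
        rw [one_mul] at h3'
        linarith
      have h4' : log x ≤ x - 1 := Real.log_le_sub_one_of_pos (by linarith)
      linarith
    have hQP : log (log x) ^ B * log (x-1) ^ (a-1) ≤ x := by
      calc log (log x) ^ B * log (x-1) ^ (a-1) ≤ log (log x) ^ B * 1 :=
            mul_le_mul_of_nonneg_left hP1 (rpow_nonneg (by linarith) _)
        _ = log (log x) ^ B := mul_one _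
        _ ≤ x := hQle
    have hk1pos : (0:ℝ) < (k:ℝ)+1 := by positivity
    have hbound : (1+B) * (log (log x) ^ B * log (x-1) ^ (a-1)) / ((k:ℝ)+1)
        ≤ (1+B) * (1+(k₀:ℝ)) := by
      rw [div_le_iff₀ hk1pos]
      have hx1k : x ≤ (1+(k₀:ℝ)) * ((k:ℝ)+1) := by
        rw [hxdef]
        have hk₀0 : (0:ℝ) ≤ (k₀:ℝ) := Nat.cast_nonneg k₀
        have hk0 : (0:ℝ) ≤ (k:ℝ) := Nat.cast_nonneg k
        nlinarith
      calc (1+B) * (log (log x) ^ B * log (x-1) ^ (a-1))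
          ≤ (1+B) * x := mul_le_mul_of_nonneg_left hQP (by linarith)
        _ ≤ (1+B) * ((1+(k₀:ℝ)) * ((k:ℝ)+1)) := mul_le_mul_of_nonneg_left hx1k (by linarith)
        _ = (1+B) * (1+(k₀:ℝ)) * ((k:ℝ)+1) := by ring
    calc v (k+1) - v k ≤ |v (k+1) - v k| := le_abs_self _
      _ ≤ (1+B) * (log (log x) ^ B * log (x-1) ^ (a-1)) / ((k:ℝ)+1) := hd
      _ ≤ (1+B) * (1+(k₀:ℝ)) := hbound
  -- threshold
  have hthr : ∃ T : ℝ, 2 ≤ T ∧ ∀ t : ℝ, T ≤ t → ∀ k : ℕ, 1 ≤ k →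
      Real.log (t+1) * Real.log (Real.log (t + Real.exp 1)) ≤ v k → t ≤ 2 * k := by
    have hshift : Tendsto (fun t : ℝ => t + 1) atTop atTop :=
      tendsto_atTop_add_const_right atTop 1 tendsto_id
    have hF1 : ∀ᶠ t : ℝ in atTop, 1 ≤ log (log (t+1)) :=
      hshift.eventually hE1
    have hF2 : ∀ᶠ t : ℝ in atTop, (a < 1 → 2 * (log (log (t+1)))^B ≤ (log (t+1))^(1-a)) := by
      rcases lt_or_ge a 1 with hlt | hge
      · have := hshift.eventually (aux_ev B (1-a) 2 (by linarith) hB0 (by norm_num))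
        filter_upwards [this] with t ht _
        exact ht
      · filter_upwards with t ht
        linarith
    obtain ⟨T₀, hT₀⟩ := eventually_atTop.mp (hF1.and hF2)
    refine ⟨max T₀ (max 2 (2*(k₀:ℝ)+2)), le_trans (le_max_left 2 _) (le_max_right T₀ _),
      fun t ht k hk1 hvk => ?_⟩
    have ht2 : (2:ℝ) ≤ t := le_trans (le_trans (le_max_left 2 _) (le_max_right T₀ _)) ht
    have htk₀ : 2*(k₀:ℝ)+2 ≤ t := le_trans (le_trans (le_max_right 2 _) (le_max_right T₀ _)) ht
    obtain ⟨hμ'1, hF2t⟩ := hT₀ t (le_trans (le_max_left T₀ _) ht)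
    by_contra hcon
    push_neg at hcon
    have hk2 : 2 * (k:ℝ) < t := by exact_mod_cast hcon
    set x : ℝ := (k:ℝ) + (k₀:ℝ) with hxdef
    obtain ⟨hℓx1, -, -, -, hLxe, hx4⟩ := hfacts x (hxk k)
    set Lx := log x with hLx
    set ℓx := log Lx with hℓx
    have hexp1 : (1:ℝ) ≤ exp 1 := Real.one_le_exp (by norm_num)
    have hLx1 : (1:ℝ) ≤ Lx := hexp1.trans hLxe
    have hxt : x ≤ t + 1 := by
      rw [hxdef]
      linarith
    set lam := log (t+1) with hlam
    set mu' := log (log (t+1)) with hmu'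
    set mu := log (log (t + exp 1)) with hmu
    have hlampos : (0:ℝ) < lam := Real.log_pos (by linarith)
    have hlam1 : (1:ℝ) ≤ lam := by
      by_contra hl
      push_neg at hl
      have : mu' < 1 := by
        rw [hmu']
        calc log lam < log 1 := Real.log_lt_log hlampos hl
          _ = 0 := Real.log_one
          _ < 1 := one_pos
      linarith
    have hLxlam : Lx ≤ lam := Real.log_le_log (by linarith) hxt
    have hℓxmu' : ℓx ≤ mu' := Real.log_le_log (by linarith) hLxlam
    have hmu'mu : mu' < mu := by
      rw [hmu', hmu]
      apply Real.log_lt_log (by positivity)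
      apply Real.log_lt_log (by linarith)
      have := Real.exp_one_gt_d9
      linarith
    have hvkup : v k < lam * mu := by
      rcases hab with hlt | hble
      · have hμB : (log (log (t+1)))^B ≤ (log (t+1))^(1-a) / 2 := by
          have := hF2t hlt
          linarith
        have hv1 : v k ≤ Lx ^ a * ℓx ^ B := by
          rw [hv k]
          exact mul_le_mul_of_nonneg_left (rpow_le_rpow_of_exponent_le hℓx1 hbB)
            (rpow_nonneg (by linarith) a)
        have hv2 : Lx ^ a * ℓx ^ B ≤ lam ^ a * mu' ^ B := by
          apply mul_le_mul (rpow_le_rpow (by linarith) hLxlam ha0.le)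
            (rpow_le_rpow (by linarith) hℓxmu' hB0)
            (rpow_nonneg (by linarith) B) (rpow_nonneg (by linarith) a)
        have hv3 : lam ^ a * mu' ^ B ≤ lam ^ a * ((lam ^ (1-a))/2) :=
          mul_le_mul_of_nonneg_left hμB (rpow_nonneg (by linarith) a)
        have hv4 : lam ^ a * ((lam ^ (1-a))/2) = lam / 2 := by
          rw [mul_div_assoc']
          congr 1
          rw [← Real.rpow_add hlampos]
          norm_num
        have hmug1 : (1:ℝ) ≤ mu := by linarith
        have hfin : lam / 2 < lam * mu := by nlinarith
        calc v k ≤ Lx ^ a * ℓx ^ B := hv1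
          _ ≤ lam ^ a * mu' ^ B := hv2
          _ ≤ lam / 2 := by rw [← hv4]; exact hv3
          _ < lam * mu := hfin
      · have hv1 : v k ≤ Lx * ℓx := by
          rw [hv k]
          have hL : Lx ^ a ≤ Lx := by
            have := rpow_le_rpow_of_exponent_le hLx1 ha1
            rwa [Real.rpow_one] at this
          have hℓ : ℓx ^ b ≤ ℓx := by
            have := rpow_le_rpow_of_exponent_le hℓx1 hble
            rwa [Real.rpow_one] at this
          exact mul_le_mul hL hℓ (rpow_nonneg (by linarith) b) (by linarith)
        have hv2 : Lx * ℓx ≤ lam * mu' :=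
          mul_le_mul hLxlam hℓxmu' (by linarith) (by linarith)
        have hv3 : lam * mu' < lam * mu := by
          exact mul_lt_mul_of_pos_left hmu'mu hlampos
        calc v k ≤ Lx * ℓx := hv1
          _ ≤ lam * mu' := hv2
          _ < lam * mu := hv3
    linarith
  obtain ⟨T, hT2, hthr'⟩ := hthr
  exact master v ((1+B) * (1+(k₀:ℝ))) 1 T
    (by positivity) one_pos.le hT2 he h2 h3 hthr'

/-- **Examples of admissible sequences.**
For `0 < a < 1` and `b ∈ ℝ`, and `k₀` sufficiently large, the sequence
`v k = (log(k+k₀))^a (log log(k+k₀))^b` satisfies `v (k+1) - v k ≪ log (v k)` and, for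
every `t > 0`, `∑_{k ≥ 1, v k ≥ h t} (v k - v (k-1))²/(v k log v k) ≪ log(t+1)/t`,
where `h t = log(t+1) log log(t+e)`. The same holds for
`v k = log(k+k₀) (log log(k+k₀))^b` when `b ≤ 1`. -/
theorem statement5 :
    (∀ a b : ℝ, 0 < a → a < 1 →
      ∃ N : ℕ, ∀ k₀ : ℕ, N ≤ k₀ →
        ∀ v : ℕ → ℝ,
          (∀ k : ℕ, v k = Real.log (k + k₀ : ℝ) ^ a *
            Real.log (Real.log (k + k₀ : ℝ)) ^ b) →
          (∃ C : ℝ, ∀ k : ℕ, 1 ≤ k → v (k + 1) - v k ≤ C * Real.log (v k)) ∧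
          (∃ C : ℝ, ∀ t : ℝ, 0 < t →
            Summable (fun k : {k : ℕ // 1 ≤ k ∧
                Real.log (t + 1) * Real.log (Real.log (t + Real.exp 1)) ≤ v k} =>
              (v k - v ((k : ℕ) - 1)) ^ 2 / (v k * Real.log (v k))) ∧
            (∑' k : {k : ℕ // 1 ≤ k ∧
                Real.log (t + 1) * Real.log (Real.log (t + Real.exp 1)) ≤ v k},
              (v k - v ((k : ℕ) - 1)) ^ 2 / (v k * Real.log (v k))) ≤
              C * Real.log (t + 1) / t)) ∧
    (∀ b : ℝ, b ≤ 1 →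
      ∃ N : ℕ, ∀ k₀ : ℕ, N ≤ k₀ →
        ∀ v : ℕ → ℝ,
          (∀ k : ℕ, v k = Real.log (k + k₀ : ℝ) *
            Real.log (Real.log (k + k₀ : ℝ)) ^ b) →
          (∃ C : ℝ, ∀ k : ℕ, 1 ≤ k → v (k + 1) - v k ≤ C * Real.log (v k)) ∧
          (∃ C : ℝ, ∀ t : ℝ, 0 < t →
            Summable (fun k : {k : ℕ // 1 ≤ k ∧
                Real.log (t + 1) * Real.log (Real.log (t + Real.exp 1)) ≤ v k} =>
              (v k - v ((k : ℕ) - 1)) ^ 2 / (v k * Real.log (v k))) ∧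
            (∑' k : {k : ℕ // 1 ≤ k ∧
                Real.log (t + 1) * Real.log (Real.log (t + Real.exp 1)) ≤ v k},
              (v k - v ((k : ℕ) - 1)) ^ 2 / (v k * Real.log (v k))) ≤
              C * Real.log (t + 1) / t)) := by
  constructor
  · intro a b ha0 ha1
    exact inst a b ha0 ha1.le (Or.inl ha1)
  · intro b hb
    obtain ⟨N, hN⟩ := inst 1 b one_pos le_rfl (Or.inr hb)
    refine ⟨N, fun k₀ hk₀ v hv => ?_⟩
    refine hN k₀ hk₀ v (fun k => ?_)
    rw [hv k, Real.rpow_one]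
end

section
/- Define li(x) = Σ_{n≥1} (log x)^n/(n!·n·ζ(n+1)) for x ≥ 1, where ζ is the Riemann zeta function. Then for every x ≥ 1 one has Σ_{ν≥1} li(x^{1/ν})/ν = Li(x) and li(x) = Σ_{ν≥1} (μ(ν)/ν)·Li(x^{1/ν}), where μ is the classical Möbius function; moreover 0 ≤ li(x) ≤ Li(x) = Σ_{n≥1} (log x)^n/(n!·n). -/
/-- The logarithmic integral `Li(x) = ∫_1^x (1 - u⁻¹)/log u du`. -/
noncomputable def Li (x : ℝ) : ℝ :=
  ∫ u in (1:ℝ)..x, (1 - u⁻¹) / Real.log u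

/-- `li(x) = ∑_{n ≥ 1} (log x)^n / (n! n ζ(n+1))`, where `ζ` is the Riemann zeta
function (whose values at real arguments `> 1` are real). -/
noncomputable def li (x : ℝ) : ℝ :=
  ∑' n : ℕ, Real.log x ^ (n + 1) /
    ((Nat.factorial (n + 1) : ℝ) * ((n : ℝ) + 1) * (riemannZeta ((n : ℂ) + 2)).re)

open Real MeasureTheory Set

/-- auxiliary: the entire function `∑ t^{n+1}/((n+1)! (n+1))`. -/
noncomputable def LiS (t : ℝ) : ℝ :=
  ∑' n : ℕ, t ^ (n + 1) / ((Nat.factorial (n + 1) : ℝ) * ((n : ℝ) + 1))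

lemma summable_pow_div_fact_succ (t : ℝ) :
    Summable (fun n : ℕ => t ^ (n + 1) / (Nat.factorial (n + 1) : ℝ)) :=
  (Real.summable_pow_div_factorial t).comp_injective (add_left_injective 1)

lemma summable_LiS (t : ℝ) :
    Summable (fun n : ℕ => t ^ (n + 1) / ((Nat.factorial (n + 1) : ℝ) * ((n : ℝ) + 1))) := by
  refine Summable.of_norm_bounded ((summable_pow_div_fact_succ |t|)) (fun n => ?_)
  have h1 : (0:ℝ) < (Nat.factorial (n+1) : ℝ) := by positivity
  have h2 : (1:ℝ) ≤ ((n:ℝ) + 1) := le_add_of_nonneg_left (Nat.cast_nonneg n)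
  rw [Real.norm_eq_abs, abs_div, abs_mul, abs_pow, abs_of_pos h1,
    abs_of_pos (by positivity : (0:ℝ) < (n:ℝ)+1)]
  gcongr
  exact le_mul_of_one_le_right h1.le h2

lemma hasDerivAt_LiS (t : ℝ) :
    HasDerivAt LiS (∑' n : ℕ, t ^ n / (Nat.factorial (n + 1) : ℝ)) t := by
  set R : ℝ := |t| + 1 with hR
  have hR0 : 0 < R := by positivity
  refine hasDerivAt_tsum_of_isPreconnected (Real.summable_pow_div_factorial R)
    (isOpen_Ioo (a := -R) (b := R)) (isPreconnected_Ioo)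
    (g := fun n y => y ^ (n + 1) / ((Nat.factorial (n + 1) : ℝ) * ((n : ℝ) + 1)))
    (g' := fun n y => y ^ n / (Nat.factorial (n + 1) : ℝ))
    (fun n y _ => ?_) (fun n y hy => ?_) (y₀ := 0) ⟨by linarith, hR0⟩ ?_ ?_
  · have h := (hasDerivAt_pow (n+1) y).div_const ((Nat.factorial (n + 1) : ℝ) * ((n : ℝ) + 1))
    convert h using 1
    · rfl
    have hf : (Nat.factorial (n+1) : ℝ) ≠ 0 := by positivity
    push_cast
    field_simp
  · have hy' : |y| ≤ R := le_of_lt (abs_lt.mpr ⟨hy.1, hy.2⟩)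
    rw [Real.norm_eq_abs, abs_div, abs_pow, abs_of_pos (by positivity : (0:ℝ) < (Nat.factorial (n+1):ℝ))]
    have h1 : |y| ^ n ≤ R ^ n := pow_le_pow_left₀ (abs_nonneg y) hy' n
    have h2 : (Nat.factorial n : ℝ) ≤ (Nat.factorial (n+1) : ℝ) := by
      exact_mod_cast Nat.factorial_le (Nat.le_succ n)
    have h3 : (0:ℝ) < (Nat.factorial n : ℝ) := by positivity
    calc |y| ^ n / (Nat.factorial (n+1) : ℝ) ≤ R ^ n / (Nat.factorial (n+1) : ℝ) := by
          gcongr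
      _ ≤ R ^ n / (Nat.factorial n : ℝ) := by gcongr <;> positivity
  · simpa using summable_zero.congr (fun n => by simp [zero_pow (Nat.succ_ne_zero n)])
  · exact abs_lt.mp (by rw [hR]; exact lt_add_one |t|)

lemma tsum_deriv_eq (t : ℝ) (ht : t ≠ 0) :
    (∑' n : ℕ, t ^ n / (Nat.factorial (n + 1) : ℝ)) = (Real.exp t - 1) / t := by
  have he : Real.exp t = ∑' n : ℕ, t ^ n / (Nat.factorial n : ℝ) := by
    rw [Real.exp_eq_exp_ℝ, NormedSpace.exp_eq_tsum_div]
  have hsum := Real.summable_pow_div_factorial t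
  have h0 : (∑' n : ℕ, t ^ n / (Nat.factorial n : ℝ))
      = 1 + ∑' n : ℕ, t ^ (n+1) / (Nat.factorial (n+1) : ℝ) := by
    rw [Summable.tsum_eq_zero_add hsum]; simp
  have h1 : (∑' n : ℕ, t ^ (n+1) / (Nat.factorial (n+1) : ℝ))
      = t * ∑' n : ℕ, t ^ n / (Nat.factorial (n+1) : ℝ) := by
    rw [← tsum_mul_left]
    exact tsum_congr fun n => by rw [pow_succ]; ring
  rw [eq_div_iff ht, he, h0, h1]; ring

lemma LiS_zero : LiS 0 = 0 := by
  unfold LiS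
  rw [show (fun n : ℕ => (0:ℝ) ^ (n + 1) / ((Nat.factorial (n + 1) : ℝ) * ((n : ℝ) + 1)))
    = fun _ => (0:ℝ) from funext fun n => by simp [zero_pow (Nat.succ_ne_zero n)], tsum_zero]

lemma continuous_LiS : Continuous LiS :=
  continuous_iff_continuousAt.mpr fun t => (hasDerivAt_LiS t).continuousAt

lemma integrand_bound {u : ℝ} (hu : 1 < u) :
    0 ≤ (1 - u⁻¹) / Real.log u ∧ (1 - u⁻¹) / Real.log u ≤ 1 := by
  have h0 : 0 < u := by linarith
  have hlog : 0 < Real.log u := Real.log_pos hu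
  have hinv : u⁻¹ ≤ 1 := by rw [inv_le_one_iff₀]; right; linarith
  have hkey : 1 - u⁻¹ ≤ Real.log u := by
    have := Real.log_le_sub_one_of_pos (inv_pos.mpr h0)
    rw [Real.log_inv] at this
    linarith
  exact ⟨div_nonneg (by linarith) hlog.le, (div_le_one hlog).mpr hkey⟩

lemma integrable_integrand {x : ℝ} (hx : 1 ≤ x) :
    IntervalIntegrable (fun u : ℝ => (1 - u⁻¹) / Real.log u) volume 1 x := by
  rw [intervalIntegrable_iff_integrableOn_Ioc_of_le hx]
  have hmeas : Measurable (fun u : ℝ => (1 - u⁻¹) / Real.log u) :=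
    ((measurable_const.sub measurable_inv).div Real.measurable_log)
  refine Integrable.mono' (g := fun _ => (1:ℝ)) (integrableOn_const measure_Ioc_lt_top.ne)
    hmeas.aestronglyMeasurable ?_
  filter_upwards [ae_restrict_mem measurableSet_Ioc] with u hu
  obtain ⟨h1, h2⟩ := integrand_bound hu.1
  rw [Real.norm_eq_abs, abs_of_nonneg h1]; exact h2

lemma Li_eq_LiS {x : ℝ} (hx : 1 ≤ x) : Li x = LiS (Real.log x) := by
  have key : ∫ u in (1:ℝ)..x, (1 - u⁻¹) / Real.log u
      = LiS (Real.log x) - LiS (Real.log 1) := by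
    refine intervalIntegral.integral_eq_sub_of_hasDeriv_right_of_le (f := fun y => LiS (Real.log y)) hx ?_ ?_
      (integrable_integrand hx)
    · exact continuous_LiS.comp_continuousOn
        (Real.continuousOn_log.mono (fun u hu => by
          simp only [Set.mem_compl_iff, Set.mem_singleton_iff]
          have : (1:ℝ) ≤ u := hu.1
          intro h; rw [h] at this; norm_num at this))
    · intro u hu
      have h0 : 0 < u := lt_trans one_pos hu.1
      have hlog : 0 < Real.log u := Real.log_pos hu.1
      have hd : HasDerivAt (fun y => LiS (Real.log y))
          ((∑' n : ℕ, (Real.log u) ^ n / (Nat.factorial (n + 1) : ℝ)) * u⁻¹) u :=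
        (hasDerivAt_LiS (Real.log u)).comp u (Real.hasDerivAt_log h0.ne')
      have heq : (∑' n : ℕ, (Real.log u) ^ n / (Nat.factorial (n + 1) : ℝ)) * u⁻¹
          = (1 - u⁻¹) / Real.log u := by
        rw [tsum_deriv_eq _ hlog.ne', Real.exp_log h0, div_mul_eq_mul_div]
        congr 1
        rw [sub_mul, one_mul, mul_inv_cancel₀ h0.ne']
      exact (heq ▸ hd).hasDerivWithinAt
  rw [Real.log_one, LiS_zero, sub_zero] at key
  exact key

lemma summable_p (n : ℕ) : Summable (fun ν : ℕ => 1 / ((ν:ℝ)+1) ^ (n+2)) := by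
  have h := summable_one_div_nat_pow.mpr (by omega : 1 < n+2)
  exact ((summable_nat_add_iff 1).mpr h).congr fun ν => by push_cast; ring

lemma zeta_nat_eq (n : ℕ) :
    riemannZeta ((n : ℂ) + 2) = ((∑' ν : ℕ, 1 / ((ν:ℝ)+1) ^ (n+2) : ℝ) : ℂ) := by
  have hs : 1 < ((n:ℂ)+2).re := by
    rw [Complex.add_re, Complex.natCast_re, Complex.re_ofNat]
    have : (0:ℝ) ≤ n := Nat.cast_nonneg n
    linarith
  rw [zeta_eq_tsum_one_div_nat_add_one_cpow hs, Complex.ofReal_tsum]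
  refine tsum_congr fun ν => ?_
  have h : ((n:ℂ)+2) = ((n+2 : ℕ) : ℂ) := by push_cast; ring
  rw [h, Complex.cpow_natCast]
  push_cast
  norm_num

lemma zeta_re_eq (n : ℕ) :
    (riemannZeta ((n : ℂ) + 2)).re = ∑' ν : ℕ, 1 / ((ν:ℝ)+1) ^ (n+2) := by
  rw [zeta_nat_eq]; exact Complex.ofReal_re _

lemma one_le_zeta_re (n : ℕ) : 1 ≤ (riemannZeta ((n : ℂ) + 2)).re := by
  rw [zeta_re_eq]
  have h := Summable.le_tsum (summable_p n) 0 (fun ν _ => by positivity)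
  simpa using h

lemma zeta_re_pos (n : ℕ) : 0 < (riemannZeta ((n : ℂ) + 2)).re :=
  lt_of_lt_of_le one_pos (one_le_zeta_re n)

lemma summable_moebius_p (n : ℕ) :
    Summable (fun ν : ℕ => (ArithmeticFunction.moebius (ν+1) : ℝ) / ((ν:ℝ)+1) ^ (n+2)) := by
  refine Summable.of_norm_bounded (summable_p n) (fun ν => ?_)
  rw [Real.norm_eq_abs, abs_div, abs_of_pos (by positivity : (0:ℝ) < ((ν:ℝ)+1)^(n+2))]
  gcongr
  have h := ArithmeticFunction.abs_moebius_le_one (n := ν+1)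
  exact_mod_cast h

lemma moebius_tsum (n : ℕ) :
    (∑' ν : ℕ, (ArithmeticFunction.moebius (ν+1) : ℝ) / ((ν:ℝ)+1) ^ (n+2))
      = ((riemannZeta ((n : ℂ) + 2)).re)⁻¹ := by
  have hs : 1 < ((n:ℂ)+2).re := by
    rw [Complex.add_re, Complex.natCast_re, Complex.re_ofNat]
    have : (0:ℝ) ≤ n := Nat.cast_nonneg n
    linarith
  have hzeta := ArithmeticFunction.LSeries_zeta_eq_riemannZeta hs
  have hmul := ArithmeticFunction.LSeries_zeta_mul_Lseries_moebius hs
  rw [hzeta] at hmul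
  have hLmu : LSeries (fun m : ℕ => (ArithmeticFunction.moebius m : ℂ)) ((n:ℂ)+2)
      = (riemannZeta ((n:ℂ)+2))⁻¹ := eq_inv_of_mul_eq_one_left (by
        rw [mul_comm] at hmul; exact hmul)
  have hsummable : LSeriesSummable (fun m : ℕ => (ArithmeticFunction.moebius m : ℂ)) ((n:ℂ)+2) :=
    ArithmeticFunction.LSeriesSummable_moebius_iff.mpr hs
  unfold LSeries at hLmu
  rw [Summable.tsum_eq_zero_add hsummable] at hLmu
  rw [LSeries.term_zero, zero_add] at hLmu
  have hterm : ∀ k : ℕ, LSeries.term (fun m : ℕ => (ArithmeticFunction.moebius m : ℂ)) ((n:ℂ)+2) (k+1)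
      = (((ArithmeticFunction.moebius (k+1) : ℝ) / ((k:ℝ)+1) ^ (n+2) : ℝ) : ℂ) := by
    intro k
    rw [LSeries.term_of_ne_zero (Nat.succ_ne_zero k)]
    have h2 : ((n:ℂ)+2) = ((n+2 : ℕ) : ℂ) := by push_cast; ring
    rw [h2]
    rw [show (((k:ℕ)+1 : ℕ) : ℂ) = ((k:ℂ)+1) by push_cast; ring, Complex.cpow_natCast]
    push_cast
    ring
  rw [tsum_congr hterm, ← Complex.ofReal_tsum, zeta_nat_eq n, ← Complex.ofReal_inv] at hLmu
  have := Complex.ofReal_injective hLmu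
  rw [this, zeta_re_eq]

/-- denominator -/
noncomputable def Dd (n : ℕ) : ℝ := (Nat.factorial (n + 1) : ℝ) * ((n : ℝ) + 1)

noncomputable def Zz (n : ℕ) : ℝ := (riemannZeta ((n : ℂ) + 2)).re

lemma Dd_pos (n : ℕ) : 0 < Dd n := by unfold Dd; positivity

lemma Zz_one_le (n : ℕ) : 1 ≤ Zz n := one_le_zeta_re n

lemma Zz_pos (n : ℕ) : 0 < Zz n := zeta_re_pos n

/-- the `Li` series term -/
noncomputable def cc (L : ℝ) (n : ℕ) : ℝ := L ^ (n + 1) / Dd n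

lemma summable_cc (L : ℝ) : Summable (cc L) := summable_LiS L

lemma cc_nonneg {L : ℝ} (hL : 0 ≤ L) (n : ℕ) : 0 ≤ cc L n :=
  div_nonneg (by positivity) (Dd_pos n).le

lemma li_eq (y : ℝ) : li y = ∑' n : ℕ, cc (Real.log y) n / Zz n :=
  tsum_congr fun n => by unfold cc Dd Zz; rw [div_div]

lemma Li_eq {y : ℝ} (hy : 1 ≤ y) : Li y = ∑' n : ℕ, cc (Real.log y) n :=
  Li_eq_LiS hy

lemma li_term_le {L : ℝ} (hL : 0 ≤ L) (n : ℕ) : cc L n / Zz n ≤ cc L n := by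
  have h := Zz_one_le n
  have h0 := cc_nonneg hL n
  calc cc L n / Zz n ≤ cc L n / 1 := by gcongr
    _ = cc L n := div_one _

lemma li_term_nonneg {L : ℝ} (hL : 0 ≤ L) (n : ℕ) : 0 ≤ cc L n / Zz n :=
  div_nonneg (cc_nonneg hL n) (Zz_pos n).le

lemma summable_li_series (L : ℝ) (hL : 0 ≤ L) : Summable (fun n => cc L n / Zz n) :=
  Summable.of_nonneg_of_le (li_term_nonneg hL) (li_term_le hL) (summable_cc L)

/-- double family for the first identity -/
noncomputable def ff (L : ℝ) (ν n : ℕ) : ℝ :=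
  L ^ (n+1) / (((ν:ℝ)+1) ^ (n+2)) / (Dd n * Zz n)

/-- double family for the Möbius identity -/
noncomputable def gg (L : ℝ) (ν n : ℕ) : ℝ :=
  (ArithmeticFunction.moebius (ν+1) : ℝ) * (L ^ (n+1) / (((ν:ℝ)+1) ^ (n+2))) / Dd n

lemma pow_nu_le (ν n : ℕ) : ((ν:ℝ)+1)^2 ≤ ((ν:ℝ)+1)^(n+2) :=
  pow_le_pow_right₀ (by have := Nat.cast_nonneg (α := ℝ) ν; linarith) (by omega)

lemma summable_inv_sq_norm : Summable (fun ν : ℕ => ‖1 / ((ν:ℝ)+1)^2‖) :=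
  (summable_p 0).congr fun ν => by
    rw [Real.norm_of_nonneg (by positivity)]

lemma summable_prod_bound {L : ℝ} (hL : 0 ≤ L) :
    Summable (fun p : ℕ × ℕ => (1 / ((p.1:ℝ)+1)^2) * cc L p.2) :=
  summable_mul_of_summable_norm (f := fun ν : ℕ => 1 / ((ν:ℝ)+1)^2) (g := cc L)
    summable_inv_sq_norm
    ((summable_cc L).congr fun n => (Real.norm_of_nonneg (cc_nonneg hL n)).symm)

lemma core_bound {L : ℝ} (hL : 0 ≤ L) (ν n : ℕ) :
    L ^ (n+1) / (((ν:ℝ)+1) ^ (n+2)) / Dd n ≤ (1 / ((ν:ℝ)+1)^2) * cc L n := by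
  have hDp := Dd_pos n
  rw [show (1 / ((ν:ℝ)+1)^2) * cc L n = L^(n+1) / (((ν:ℝ)+1)^2 * Dd n) by
    unfold cc; rw [div_mul_div_comm, one_mul], div_div]
  refine div_le_div_of_nonneg_left (by positivity) (by positivity) ?_
  exact mul_le_mul_of_nonneg_right (pow_nu_le ν n) hDp.le

lemma ff_nonneg {L : ℝ} (hL : 0 ≤ L) (ν n : ℕ) : 0 ≤ ff L ν n := by
  unfold ff
  have := Dd_pos n; have := Zz_pos n
  positivity

lemma ff_le {L : ℝ} (hL : 0 ≤ L) (ν n : ℕ) : ff L ν n ≤ (1 / ((ν:ℝ)+1)^2) * cc L n := by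
  unfold ff
  refine le_trans ?_ (core_bound hL ν n)
  have hDp := Dd_pos n
  have hZp := Zz_pos n
  have hZ1 := Zz_one_le n
  have h1 : (0:ℝ) < ((ν:ℝ)+1)^(n+2) := by positivity
  rw [div_div, div_div]
  refine div_le_div_of_nonneg_left (by positivity) (by positivity) ?_
  nlinarith [mul_le_mul_of_nonneg_left hZ1 (mul_pos h1 hDp).le]

lemma summable_ff {L : ℝ} (hL : 0 ≤ L) : Summable (fun p : ℕ × ℕ => ff L p.1 p.2) :=
  Summable.of_nonneg_of_le (fun p => ff_nonneg hL p.1 p.2)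
    (fun p => ff_le hL p.1 p.2) (summable_prod_bound hL)

lemma gg_abs_le {L : ℝ} (hL : 0 ≤ L) (ν n : ℕ) : ‖gg L ν n‖ ≤ (1 / ((ν:ℝ)+1)^2) * cc L n := by
  unfold gg
  have hmu : |(ArithmeticFunction.moebius (ν+1) : ℝ)| ≤ 1 := by
    exact_mod_cast ArithmeticFunction.abs_moebius_le_one (n := ν+1)
  have h1 : (0:ℝ) < ((ν:ℝ)+1)^(n+2) := by positivity
  have hDp := Dd_pos n
  have hA : (0:ℝ) ≤ L^(n+1) / (((ν:ℝ)+1) ^ (n+2)) := by positivity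
  rw [Real.norm_eq_abs, abs_div, abs_of_pos hDp, abs_mul, abs_of_nonneg hA]
  refine le_trans ?_ (core_bound hL ν n)
  calc |(ArithmeticFunction.moebius (ν+1) : ℝ)| * (L^(n+1) / (((ν:ℝ)+1) ^ (n+2))) / Dd n
      ≤ 1 * (L^(n+1) / (((ν:ℝ)+1) ^ (n+2))) / Dd n := by gcongr
    _ = L^(n+1) / (((ν:ℝ)+1) ^ (n+2)) / Dd n := by rw [one_mul]

lemma summable_gg {L : ℝ} (hL : 0 ≤ L) : Summable (fun p : ℕ × ℕ => gg L p.1 p.2) :=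
  Summable.of_norm_bounded (summable_prod_bound hL) (fun p => gg_abs_le hL p.1 p.2)

lemma aux_alg (L w d z : ℝ) (n : ℕ) (hw : w ≠ 0) (hd : d ≠ 0) (hz : z ≠ 0) :
    ((w⁻¹ * L) ^ (n+1) / d) / z / w = L ^ (n+1) / (w ^ (n+2)) / (d * z) := by
  rw [mul_pow, inv_pow]
  field_simp
  ring

lemma aux_alg2 (m L w d : ℝ) (n : ℕ) (hw : w ≠ 0) (hd : d ≠ 0) :
    (m / w) * ((w⁻¹ * L) ^ (n+1) / d) = m * (L ^ (n+1) / w ^ (n+2)) / d := by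
  rw [mul_pow, inv_pow]
  field_simp
  ring

lemma li_rpow_eq {x : ℝ} (hx : 1 ≤ x) (ν : ℕ) :
    li (x ^ (((ν : ℝ) + 1)⁻¹)) / ((ν : ℝ) + 1) = ∑' n : ℕ, ff (Real.log x) ν n := by
  have hx0 : (0:ℝ) < x := lt_of_lt_of_le one_pos hx
  have hν : (0:ℝ) < (ν:ℝ)+1 := by positivity
  rw [li_eq, Real.log_rpow hx0, ← tsum_div_const]
  refine tsum_congr fun n => ?_
  have hDp := (Dd_pos n).ne'
  have hZp := (Zz_pos n).ne'
  unfold cc ff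
  exact aux_alg _ _ _ _ n hν.ne' hDp hZp

lemma Li_rpow_eq {x : ℝ} (hx : 1 ≤ x) (ν : ℕ) :
    ((ArithmeticFunction.moebius (ν + 1) : ℝ) / ((ν : ℝ) + 1)) * Li (x ^ (((ν : ℝ) + 1)⁻¹))
      = ∑' n : ℕ, gg (Real.log x) ν n := by
  have hx0 : (0:ℝ) < x := lt_of_lt_of_le one_pos hx
  have hν : (0:ℝ) < (ν:ℝ)+1 := by positivity
  rw [Li_eq (Real.one_le_rpow hx (by positivity)), Real.log_rpow hx0, ← tsum_mul_left]
  refine tsum_congr fun n => ?_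
  have hDp := (Dd_pos n).ne'
  unfold cc gg
  exact aux_alg2 _ _ _ _ n hν.ne' hDp

lemma sum_ff_eq {L : ℝ} (n : ℕ) : ∑' ν : ℕ, ff L ν n = cc L n := by
  have h : ∀ ν : ℕ, ff L ν n = (L^(n+1)/(Dd n * Zz n)) * (1/((ν:ℝ)+1)^(n+2)) := fun ν => by
    unfold ff; ring
  rw [tsum_congr h, tsum_mul_left,
    show (∑' ν : ℕ, 1/((ν:ℝ)+1)^(n+2)) = Zz n from (zeta_re_eq n).symm]
  have hZp := (Zz_pos n).ne'
  have hDp := (Dd_pos n).ne'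
  unfold cc
  field_simp

lemma sum_gg_eq {L : ℝ} (n : ℕ) : ∑' ν : ℕ, gg L ν n = cc L n / Zz n := by
  have h : ∀ ν : ℕ, gg L ν n = (L^(n+1)/Dd n) *
      ((ArithmeticFunction.moebius (ν+1) : ℝ) / ((ν:ℝ)+1)^(n+2)) := fun ν => by
    unfold gg; ring
  rw [tsum_congr h, tsum_mul_left, moebius_tsum n]
  rw [show ((riemannZeta ((n : ℂ) + 2)).re)⁻¹ = (Zz n)⁻¹ from rfl]
  unfold cc
  ring

/-- For every `x ≥ 1` (all series converging absolutely):
`∑_{ν ≥ 1} li(x^{1/ν})/ν = Li(x)`, `li(x) = ∑_{ν ≥ 1} (μ(ν)/ν) Li(x^{1/ν})`, and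
`0 ≤ li(x) ≤ Li(x) = ∑_{n ≥ 1} (log x)^n/(n! n)`. -/
theorem statement8 : ∀ x : ℝ, 1 ≤ x →
    Summable (fun n : ℕ => Real.log x ^ (n + 1) /
      ((Nat.factorial (n + 1) : ℝ) * ((n : ℝ) + 1) * (riemannZeta ((n : ℂ) + 2)).re)) ∧
    Summable (fun ν : ℕ => li (x ^ (((ν : ℝ) + 1)⁻¹)) / ((ν : ℝ) + 1)) ∧
    (∑' ν : ℕ, li (x ^ (((ν : ℝ) + 1)⁻¹)) / ((ν : ℝ) + 1)) = Li x ∧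
    Summable (fun ν : ℕ =>
      ((ArithmeticFunction.moebius (ν + 1) : ℝ) / ((ν : ℝ) + 1)) * Li (x ^ (((ν : ℝ) + 1)⁻¹))) ∧
    li x = (∑' ν : ℕ,
      ((ArithmeticFunction.moebius (ν + 1) : ℝ) / ((ν : ℝ) + 1)) * Li (x ^ (((ν : ℝ) + 1)⁻¹))) ∧
    0 ≤ li x ∧ li x ≤ Li x ∧
    Summable (fun n : ℕ =>
      Real.log x ^ (n + 1) / ((Nat.factorial (n + 1) : ℝ) * ((n : ℝ) + 1))) ∧
    Li x = (∑' n : ℕ,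
      Real.log x ^ (n + 1) / ((Nat.factorial (n + 1) : ℝ) * ((n : ℝ) + 1))) := by
  intro x hx
  have hx0 : (0:ℝ) < x := lt_of_lt_of_le one_pos hx
  have hL : 0 ≤ Real.log x := Real.log_nonneg hx
  refine ⟨?_, ?_, ?_, ?_, ?_, ?_, ?_, ?_, ?_⟩
  · exact (summable_li_series _ hL).congr fun n => by unfold cc Dd Zz; rw [div_div]
  · exact ((summable_ff hL).prod).congr fun ν => (li_rpow_eq hx ν).symm
  · rw [tsum_congr (fun ν => li_rpow_eq hx ν),
      (Summable.tsum_comm (f := fun ν n => ff (Real.log x) ν n) (summable_ff hL)).symm,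
      tsum_congr (fun n => sum_ff_eq (L := Real.log x) n)]
    exact (Li_eq hx).symm
  · exact ((summable_gg hL).prod).congr fun ν => (Li_rpow_eq hx ν).symm
  · rw [tsum_congr (fun ν => Li_rpow_eq hx ν), li_eq,
      tsum_congr (fun n => (sum_gg_eq (L := Real.log x) n).symm)]
    exact (Summable.tsum_comm (f := fun ν n => gg (Real.log x) ν n) (summable_gg hL))
  · rw [li_eq]; exact tsum_nonneg (li_term_nonneg hL)
  · rw [li_eq, Li_eq hx]
    exact Summable.tsum_le_tsum (li_term_le hL) (summable_li_series _ hL) (summable_cc _)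
  · exact summable_LiS (Real.log x)
  · exact Li_eq_LiS hx
end

section
/- Let F_c : [1,∞) → [0,∞) be a continuous non-decreasing function with F_c(1) = 0, F_c(x) → ∞, and F_c(x) ≤ C·x/log(x+1) for all x ≥ 1 and some constant C > 0. Set q_0 = 1 and q_j = min{x : F_c(x) = j} for j ≥ 1, and let {P_j}_{j≥1} be independent random variables, where P_j takes values in (q_{j−1}, q_j] and is distributed according to the probability measure dF_c restricted to (q_{j−1}, q_j]. Let u_0 be the positive root of e^u = 1+u+u² and D = max{√(8C), 8/u_0}. Then for every t ∈ ℝ and every J ≥ 1 such that x := q_J satisfies x/log(x+1) ≥ log(|t|+1), one has P( |Σ_{j=1}^J P_j^{−it} − ∫_1^x u^{−it} dF_c(u)| ≥ √2·D·(√x + √(x·log(|t|+1)/log(x+1))) ) ≤ 4/((x+1)²(|t|+1)²). -/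
/-!
Put `Z_j = P_j^{-it}`. Since `P_j` has law `dF_c` on `(q_{j-1}, q_j]`, the integral
`∫_1^x u^{-it} dF_c(u)` equals `∑_{j ≤ J} E Z_j`, so the event is a large deviation of a sum of
independent centred variables. If `|∑ (Z_j - E Z_j)| ≥ √2 T`, its real or imaginary part is at
least `T` in absolute value. A real centred summand `W` has `|W| ≤ 2` and `E W² ≤ 1`, and
`e^u ≤ 1 + u + u²` for `|u| ≤ u₀`, so `E e^{λW} ≤ 1 + λ² ≤ e^{λ²}` when `0 ≤ 2λ ≤ u₀`; Chernoff's
bound gives `exp(-λT + λ²J)` for each of the four one-sided tails. As `J = F_c(x) ≤ Cx/log(x+1)`,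
taking `λ = min(T/2J, u₀/2)` makes this at most `1/((x+1)²(|t|+1)²)`.
-/

open MeasureTheory ProbabilityTheory Filter Set

theorem Real.log_add_one_le_sqrt {x : ℝ} (hx : 0 ≤ x) : Real.log (x + 1) ≤ √x := by
  set s := √x
  have hcubic : 1 + s + s ^ 2 / 2 + s ^ 3 / 6 ≤ Real.exp s := by
    simpa [Finset.sum_range_succ, Nat.factorial] using
      Real.sum_le_exp_of_nonneg (Real.sqrt_nonneg x) 4
  have hxs : x + 1 ≤ Real.exp s := by
    nlinarith [Real.sq_sqrt hx, Real.sqrt_nonneg x, sq_nonneg (s - 3 / 2)]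
  simpa using Real.log_le_log (by linarith) hxs

theorem Real.antitoneOn_one_add_add_sq_mul_exp_neg :
    AntitoneOn (fun v => (1 + v + v ^ 2) * Real.exp (-v)) (Ici 1) := by
  have hderiv : ∀ v : ℝ, HasDerivAt (fun v => (1 + v + v ^ 2) * Real.exp (-v))
      ((v - v ^ 2) * Real.exp (-v)) v := fun v =>
    (((hasDerivAt_id' v).const_add 1).add (hasDerivAt_pow 2 v)).mul
      (hasDerivAt_neg' v).exp |>.congr_deriv (by simp only [Pi.add_apply]; ring)
  refine antitoneOn_of_deriv_nonpos (convex_Ici 1) (by fun_prop)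
    (fun v _ => (hderiv v).differentiableAt.differentiableWithinAt) fun v hv => ?_
  rw [interior_Ici, mem_Ioi] at hv
  rw [(hderiv v).deriv]
  exact mul_nonpos_of_nonpos_of_nonneg (by nlinarith) (Real.exp_pos _).le

theorem Real.exp_le_one_add_add_sq_of_abs_le {u₀ u : ℝ} (hu₀ : Real.exp u₀ = 1 + u₀ + u₀ ^ 2)
    (hu : |u| ≤ u₀) : Real.exp u ≤ 1 + u + u ^ 2 := by
  rcases le_or_gt |u| 1 with h1 | h1
  · linarith [(abs_le.1 (Real.abs_exp_sub_one_sub_id_le h1)).2]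
  rcases lt_abs.1 h1 with h1 | h1
  · -- `(1 + v + v²) e^{-v}` decreases on `[1, ∞)` and equals `1` at `v = u₀`
    have hu' : u ≤ u₀ := (le_abs_self u).trans hu
    have hanti := Real.antitoneOn_one_add_add_sq_mul_exp_neg (mem_Ici.2 h1.le)
      (mem_Ici.2 (h1.trans_le hu').le) hu'
    simp only [← hu₀, ← Real.exp_add, add_neg_cancel, Real.exp_zero] at hanti
    have := mul_le_mul_of_nonneg_right hanti (Real.exp_pos u).le
    rwa [one_mul, mul_assoc, ← Real.exp_add, neg_add_cancel, Real.exp_zero, mul_one] at this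
  · nlinarith [Real.exp_le_one_iff.2 (by linarith : u ≤ 0)]

theorem Complex.le_abs_re_or_le_abs_im_of_sqrt_two_mul_le_norm {z : ℂ} {T : ℝ}
    (h : √2 * T ≤ ‖z‖) : T ≤ |z.re| ∨ T ≤ |z.im| := by
  by_contra! hlt
  have hT : 0 ≤ √2 * T := mul_nonneg (Real.sqrt_nonneg 2) ((abs_nonneg _).trans hlt.1.le)
  have hsq := pow_le_pow_left₀ hT h 2
  rw [mul_pow, Real.sq_sqrt zero_le_two, Complex.sq_norm, Complex.normSq_apply] at hsq
  nlinarith [abs_nonneg z.re, abs_nonneg z.im, sq_abs z.re, sq_abs z.im]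

theorem exists_chernoff_parameter {u₀ C x ℓ L n : ℝ} (hu₀ : 0 < u₀) (hn : 0 < n) (hℓ : 0 < ℓ)
    (hℓx : ℓ ≤ √x) (hL : 0 ≤ L) (hLx : L ≤ x / ℓ) (hnC : n ≤ C * x / ℓ) :
    ∃ l, 0 ≤ l ∧ 2 * l ≤ u₀ ∧
      2 * ℓ + 2 * L ≤ l * (max √(8 * C) (8 / u₀) * (√x + √(x * L / ℓ))) - l ^ 2 * n := by
  have hx : 0 < x := Real.sqrt_pos.1 (hℓ.trans_le hℓx)
  have hC : 0 < C := by nlinarith [(le_div_iff₀ hℓ).1 hnC]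
  set D := max √(8 * C) (8 / u₀)
  set b := √x + √(x * L / ℓ)
  set T := D * b
  have hb : 0 < b := by positivity
  have hD2 : 8 * C ≤ D ^ 2 := by
    nlinarith [Real.sq_sqrt (by positivity : (0 : ℝ) ≤ 8 * C), le_max_left √(8 * C) (8 / u₀),
      Real.sqrt_nonneg (8 * C)]
  have hb2 : x + x * L / ℓ ≤ b ^ 2 := by
    nlinarith [Real.sq_sqrt hx.le, Real.sq_sqrt (by positivity : 0 ≤ x * L / ℓ),
      Real.sqrt_nonneg x, Real.sqrt_nonneg (x * L / ℓ)]
  rcases le_total (T / n) u₀ with hsmall | hlarge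
  · -- `l = T / (2n)` minimises `-lT + l²n`, with minimum `-T² / (4n)`
    refine ⟨T / (2 * n), by positivity, by rwa [mul_div_assoc', mul_div_mul_left _ _ two_ne_zero],
      ?_⟩
    have hT2 : 8 * C * (x + x * L / ℓ) ≤ T ^ 2 := by
      rw [mul_pow]; exact mul_le_mul hD2 hb2 (by positivity) (sq_nonneg D)
    have hmin : T / (2 * n) * T - (T / (2 * n)) ^ 2 * n = T ^ 2 / (4 * n) := by
      field_simp; ring
    rw [hmin, le_div_iff₀ (by positivity)]
    have : (2 * ℓ + 2 * L) * (4 * n) ≤ (2 * ℓ + 2 * L) * (4 * (C * x / ℓ)) := by gcongr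
    calc (2 * ℓ + 2 * L) * (4 * n) ≤ 8 * C * (x + x * L / ℓ) := by
          convert this using 1; field_simp; ring
      _ ≤ T ^ 2 := hT2
  · refine ⟨u₀ / 2, by positivity, by linarith, ?_⟩
    have hnu : n * u₀ ≤ T := by rwa [le_div_iff₀ hn, mul_comm] at hlarge
    have hLb : L ≤ √(x * L / ℓ) := Real.le_sqrt_of_sq_le (by
      calc L ^ 2 = L * L := sq L
        _ ≤ x / ℓ * L := mul_le_mul_of_nonneg_right hLx hL
        _ = x * L / ℓ := by ring)
    calc 2 * ℓ + 2 * L ≤ 2 * b := by linarith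
      _ = u₀ / 4 * (8 / u₀ * b) := by field_simp; ring
      _ ≤ u₀ / 4 * T := by gcongr; exact mul_le_mul_of_nonneg_right (le_max_right _ _) hb.le
      _ ≤ u₀ / 2 * T - (u₀ / 2) ^ 2 * n := by nlinarith

namespace ProbabilityTheory

variable {Ω ι : Type*} [MeasurableSpace Ω] {μ : Measure Ω} [IsProbabilityMeasure μ] {u₀ l : ℝ}

theorem ae_abs_sub_integral_le_two {Y : Ω → ℝ} (hb : ∀ᵐ ω ∂μ, |Y ω| ≤ 1) :
    ∀ᵐ ω ∂μ, |Y ω - μ[Y]| ≤ 2 := by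
  have hc : |μ[Y]| ≤ 1 := by
    simpa using norm_integral_le_of_norm_le_const (μ := μ) (f := Y) (C := 1) (by simpa using hb)
  filter_upwards [hb] with ω hω
  linarith [abs_sub (Y ω) μ[Y]]

theorem mgf_sub_integral_le_exp_sq {Y : Ω → ℝ} (hY : AEMeasurable Y μ)
    (hb : ∀ᵐ ω ∂μ, |Y ω| ≤ 1) (hu₀ : Real.exp u₀ = 1 + u₀ + u₀ ^ 2) (hl : 0 ≤ l)
    (hlu : 2 * l ≤ u₀) :
    mgf (fun ω => Y ω - μ[Y]) μ l ≤ Real.exp (l ^ 2) := by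
  have hW := ae_abs_sub_integral_le_two hb
  set c := μ[Y]
  have hYi : Integrable Y μ := .of_bound hY.aestronglyMeasurable 1 (by simpa using hb)
  have hvar : ∫ ω, (Y ω - c) ^ 2 ∂μ ≤ 1 := by
    have := variance_le_sq_of_bounded (a := -1) (b := 1) (by simpa [abs_le] using hb) hY
    rw [variance_eq_integral hY] at this
    linarith
  have hWi : Integrable (fun ω => Y ω - c) μ := hYi.sub (integrable_const c)
  have hW2i : Integrable (fun ω => (Y ω - c) ^ 2) μ :=
    .of_bound ((hY.sub_const c).pow_const 2).aestronglyMeasurable 4 (by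
      filter_upwards [hW] with ω hω
      simpa using pow_le_pow_left₀ (abs_nonneg _) hω 2 |>.trans_eq (by norm_num))
  have hlin : Integrable (fun ω => 1 + l * (Y ω - c)) μ :=
    (integrable_const 1).add (hWi.const_mul l)
  have hquad : ∀ᵐ ω ∂μ, Real.exp (l * (Y ω - c)) ≤
      1 + l * (Y ω - c) + l ^ 2 * (Y ω - c) ^ 2 := by
    filter_upwards [hW] with ω hω
    have := Real.exp_le_one_add_add_sq_of_abs_le hu₀ (u := l * (Y ω - c)) (by
      rw [abs_mul, abs_of_nonneg hl]; nlinarith)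
    linarith [mul_pow l (Y ω - c) 2]
  calc mgf (fun ω => Y ω - c) μ l
      ≤ ∫ ω, (1 + l * (Y ω - c) + l ^ 2 * (Y ω - c) ^ 2) ∂μ :=
        integral_mono_ae (integrable_exp_mul_of_le l 2 hl (hY.sub_const c)
          (by filter_upwards [hW] with ω hω using (le_abs_self _).trans hω))
          (hlin.add (hW2i.const_mul _)) hquad
    _ = 1 + l ^ 2 * ∫ ω, (Y ω - c) ^ 2 ∂μ := by
        rw [integral_add hlin (hW2i.const_mul _), integral_add (integrable_const 1)
          (hWi.const_mul l), integral_const_mul, integral_const_mul,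
          integral_sub hYi (integrable_const c)]
        simp [c]
    _ ≤ 1 + l ^ 2 := by nlinarith [sq_nonneg l]
    _ ≤ Real.exp (l ^ 2) := by linarith [Real.add_one_le_exp (l ^ 2)]

theorem measure_sum_sub_integral_ge_le_exp {Y : ι → Ω → ℝ} (hind : iIndepFun Y μ)
    (hm : ∀ i, Measurable (Y i)) (hb : ∀ i, ∀ᵐ ω ∂μ, |Y i ω| ≤ 1)
    (hu₀ : Real.exp u₀ = 1 + u₀ + u₀ ^ 2) (hl : 0 ≤ l) (hlu : 2 * l ≤ u₀) (s : Finset ι) (T : ℝ) :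
    μ {ω | T ≤ ∑ i ∈ s, (Y i ω - μ[Y i])} ≤
      ENNReal.ofReal (Real.exp (-(l * T) + l ^ 2 * s.card)) := by
  set W : ι → Ω → ℝ := fun i ω => Y i ω - μ[Y i]
  have hWm : ∀ i, Measurable (W i) := fun i => (hm i).sub_const _
  have hWind : iIndepFun W μ :=
    hind.comp (fun i (y : ℝ) => y - ∫ ω, Y i ω ∂μ) fun i => measurable_sub_const _
  have hexp : ∀ i, Integrable (fun ω => Real.exp (l * W i ω)) μ := fun i =>
    integrable_exp_mul_of_le l 2 hl (hWm i).aemeasurable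
      ((ae_abs_sub_integral_le_two (hb i)).mono fun ω h => (le_abs_self _).trans h)
  have hmgf : mgf (∑ i ∈ s, W i) μ l ≤ Real.exp (l ^ 2 * s.card) :=
    calc mgf (∑ i ∈ s, W i) μ l = ∏ i ∈ s, mgf (W i) μ l :=
          hWind.mgf_sum hWm _
      _ ≤ ∏ _i ∈ s, Real.exp (l ^ 2) :=
          Finset.prod_le_prod (fun _ _ => mgf_nonneg)
            fun i _ => mgf_sub_integral_le_exp_sq (hm i).aemeasurable (hb i) hu₀ hl hlu
      _ = Real.exp (l ^ 2 * s.card) := by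
          rw [Finset.prod_const, ← Real.exp_nat_mul, mul_comm]
  have hchernoff := measure_ge_le_exp_mul_mgf (X := ∑ i ∈ s, W i) T hl
    (hWind.integrable_exp_mul_sum hWm fun i _ => hexp i)
  calc μ {ω | T ≤ ∑ i ∈ s, W i ω}
      = ENNReal.ofReal (μ.real {ω | T ≤ (∑ i ∈ s, W i) ω}) := by
        rw [ofReal_measureReal]; simp only [Finset.sum_apply]
    _ ≤ ENNReal.ofReal (Real.exp (-(l * T) + l ^ 2 * s.card)) := by
        refine ENNReal.ofReal_le_ofReal (hchernoff.trans ?_)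
        rw [neg_mul, Real.exp_add]
        exact mul_le_mul_of_nonneg_left hmgf (Real.exp_pos _).le

theorem measure_abs_sum_sub_integral_ge_le_exp {Y : ι → Ω → ℝ} (hind : iIndepFun Y μ)
    (hm : ∀ i, Measurable (Y i)) (hb : ∀ i, ∀ᵐ ω ∂μ, |Y i ω| ≤ 1)
    (hu₀ : Real.exp u₀ = 1 + u₀ + u₀ ^ 2) (hl : 0 ≤ l) (hlu : 2 * l ≤ u₀) (s : Finset ι) (T : ℝ) :
    μ {ω | T ≤ |∑ i ∈ s, (Y i ω - μ[Y i])|} ≤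
      2 * ENNReal.ofReal (Real.exp (-(l * T) + l ^ 2 * s.card)) := by
  have hsub : {ω | T ≤ |∑ i ∈ s, (Y i ω - μ[Y i])|} ⊆
      {ω | T ≤ ∑ i ∈ s, (Y i ω - μ[Y i])} ∪
        {ω | T ≤ ∑ i ∈ s, (-Y i ω - ∫ ω', -Y i ω' ∂μ)} := by
    intro ω hω
    have hflip : ∑ i ∈ s, (-Y i ω - ∫ ω', -Y i ω' ∂μ) =
        -∑ i ∈ s, (Y i ω - μ[Y i]) := by
      rw [← Finset.sum_neg_distrib]
      exact Finset.sum_congr rfl fun i _ => by rw [integral_neg]; ring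
    rw [mem_union, mem_ofPred_eq, mem_ofPred_eq, hflip]
    exact (le_abs'.1 hω).symm.imp id fun h => by linarith
  calc _ ≤ _ := measure_mono hsub
    _ ≤ _ := measure_union_le _ _
    _ ≤ _ := by
      rw [two_mul]
      gcongr
      · exact measure_sum_sub_integral_ge_le_exp hind hm hb hu₀ hl hlu s T
      · exact measure_sum_sub_integral_ge_le_exp
          (hind.comp (fun _ => Neg.neg) fun _ => measurable_neg) (fun i => (hm i).neg)
          (fun i => by simpa using hb i) hu₀ hl hlu s T

theorem measure_norm_sum_sub_integral_ge_le_exp {Z : ι → Ω → ℂ} (hind : iIndepFun Z μ)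
    (hm : ∀ i, Measurable (Z i)) (hb : ∀ i, ∀ᵐ ω ∂μ, ‖Z i ω‖ ≤ 1)
    (hu₀ : Real.exp u₀ = 1 + u₀ + u₀ ^ 2) (hl : 0 ≤ l) (hlu : 2 * l ≤ u₀) (s : Finset ι) (T : ℝ) :
    μ {ω | √2 * T ≤ ‖∑ i ∈ s, (Z i ω - μ[Z i])‖} ≤
      4 * ENNReal.ofReal (Real.exp (-(l * T) + l ^ 2 * s.card)) := by
  have hZi : ∀ i, Integrable (Z i) μ := fun i => .of_bound (hm i).aestronglyMeasurable 1 (hb i)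
  have hre : ∀ ω, (∑ i ∈ s, (Z i ω - μ[Z i])).re =
      ∑ i ∈ s, ((Z i ω).re - ∫ ω', (Z i ω').re ∂μ) := fun ω => by
    rw [Complex.re_sum]
    exact Finset.sum_congr rfl fun i _ => congrArg (_ - ·) (integral_re (hZi i)).symm
  have him : ∀ ω, (∑ i ∈ s, (Z i ω - μ[Z i])).im =
      ∑ i ∈ s, ((Z i ω).im - ∫ ω', (Z i ω').im ∂μ) := fun ω => by
    rw [Complex.im_sum]
    exact Finset.sum_congr rfl fun i _ => congrArg (_ - ·) (integral_im (hZi i)).symm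
  have hsub : {ω | √2 * T ≤ ‖∑ i ∈ s, (Z i ω - μ[Z i])‖} ⊆
      {ω | T ≤ |∑ i ∈ s, ((Z i ω).re - ∫ ω', (Z i ω').re ∂μ)|} ∪
        {ω | T ≤ |∑ i ∈ s, ((Z i ω).im - ∫ ω', (Z i ω').im ∂μ)|} :=
    fun ω hω => by
      rw [mem_union, mem_ofPred_eq, mem_ofPred_eq, ← hre, ← him]
      exact Complex.le_abs_re_or_le_abs_im_of_sqrt_two_mul_le_norm hω
  calc _ ≤ _ := measure_mono hsub
    _ ≤ _ := measure_union_le _ _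
    _ ≤ _ := by
      rw [show (4 : ENNReal) = 2 + 2 by norm_num, add_mul]
      gcongr
      · exact measure_abs_sum_sub_integral_ge_le_exp
          (hind.comp (fun _ => Complex.re) fun _ => Complex.measurable_re)
          (fun i => Complex.measurable_re.comp (hm i))
          (fun i => (hb i).mono fun ω h => (Complex.abs_re_le_norm _).trans h) hu₀ hl hlu s T
      · exact measure_abs_sum_sub_integral_ge_le_exp
          (hind.comp (fun _ => Complex.im) fun _ => Complex.measurable_im)
          (fun i => Complex.measurable_im.comp (hm i))
          (fun i => (hb i).mono fun ω h => (Complex.abs_im_le_norm _).trans h) hu₀ hl hlu s T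

end ProbabilityTheory

section Blocks

variable {Ω : Type*} [MeasurableSpace Ω] {μ : Measure Ω} {ν : Measure ℝ} {q : ℕ → ℝ}
  {X : ℕ → Ω → ℝ}

theorem MeasureTheory.sum_integral_comp_eq_setIntegral_Ioc {E : Type*} [NormedAddCommGroup E]
    [NormedSpace ℝ E] (hq : Monotone q) (hX : ∀ k, AEMeasurable (X k) μ)
    (hdist : ∀ k, μ.map (X k) = ν.restrict (Ioc (q k) (q (k + 1)))) {f : ℝ → E}
    (hf : StronglyMeasurable f) (hfi : ∀ k, Integrable (fun ω => f (X k ω)) μ) (n : ℕ) :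
    ∑ k ∈ Finset.range n, ∫ ω, f (X k ω) ∂μ = ∫ x in Ioc (q 0) (q n), f x ∂ν := by
  have hpiece : ∀ k, ∫ ω, f (X k ω) ∂μ = ∫ x in q k..q (k + 1), f x ∂ν := fun k => by
    rw [intervalIntegral.integral_of_le (hq k.le_succ), ← hdist k,
      integral_map (hX k) hf.aestronglyMeasurable]
  have hint : ∀ k, IntervalIntegrable f ν (q k) (q (k + 1)) := fun k => by
    rw [intervalIntegrable_iff_integrableOn_Ioc_of_le (hq k.le_succ), IntegrableOn, ← hdist k,
      integrable_map_measure hf.aestronglyMeasurable (hX k)]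
    exact hfi k
  rw [← intervalIntegral.integral_of_le (hq (Nat.zero_le n)),
    ← intervalIntegral.sum_integral_adjacent_intervals fun k _ => hint k]
  exact Finset.sum_congr rfl fun k _ => hpiece k

theorem ae_norm_cpow_neg_mul_I_le_one (hq : ∀ k, 0 ≤ q k) (hX : ∀ k, AEMeasurable (X k) μ)
    (hdist : ∀ k, μ.map (X k) = ν.restrict (Ioc (q k) (q (k + 1)))) (t : ℝ) (k : ℕ) :
    ∀ᵐ ω ∂μ, ‖(X k ω : ℂ) ^ (-(t : ℂ) * Complex.I)‖ ≤ 1 := by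
  filter_upwards [ae_of_ae_map (hX k) (hdist k ▸ ae_restrict_mem measurableSet_Ioc)] with ω hω
  simp [Complex.norm_cpow_eq_rpow_re_of_pos ((hq k).trans_lt hω.1)]

theorem sum_cpow_sub_setIntegral_eq [IsFiniteMeasure μ] (hq : Monotone q) (hq0 : 0 ≤ q 0)
    (hX : ∀ k, Measurable (X k)) (hdist : ∀ k, μ.map (X k) = ν.restrict (Ioc (q k) (q (k + 1))))
    (t : ℝ) (n : ℕ) (ω : Ω) :
    ∑ k ∈ Finset.range n, (X k ω : ℂ) ^ (-(t : ℂ) * Complex.I) -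
        ∫ u in Ioc (q 0) (q n), (u : ℂ) ^ (-(t : ℂ) * Complex.I) ∂ν =
      ∑ k ∈ Finset.range n, ((X k ω : ℂ) ^ (-(t : ℂ) * Complex.I) -
        ∫ ω', (X k ω' : ℂ) ^ (-(t : ℂ) * Complex.I) ∂μ) := by
  have hXa : ∀ k, AEMeasurable (X k) μ := fun k => (hX k).aemeasurable
  rw [Finset.sum_sub_distrib, sum_integral_comp_eq_setIntegral_Ioc hq hXa hdist
    (f := fun u : ℝ => (u : ℂ) ^ (-(t : ℂ) * Complex.I))
    (by fun_prop : Measurable _).stronglyMeasurable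
    (fun k => .of_bound (by fun_prop : Measurable _).aestronglyMeasurable 1
      (ae_norm_cpow_neg_mul_I_le_one (fun k => hq0.trans (hq k.zero_le)) hXa hdist t k))]

end Blocks

theorem StieltjesFunction.apply_eq_natCast_of_isLeast {F : StieltjesFunction ℝ} {q : ℕ → ℝ}
    (hF1 : F 1 = 0) (hq0 : q 0 = 1) (hq : ∀ j : ℕ, 1 ≤ j → IsLeast {x : ℝ | F x = j} (q j))
    (j : ℕ) : F (q j) = j := by
  rcases j.eq_zero_or_pos with rfl | hj
  · simp [hq0, hF1]
  · exact (hq j hj).1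

theorem strictMono_of_monotone_comp_eq_natCast {f : ℝ → ℝ} (hf : Monotone f) {q : ℕ → ℝ}
    (h : ∀ j, f (q j) = j) : StrictMono q := fun i j hij =>
  hf.reflect_lt (by rw [h, h]; exact_mod_cast hij)

theorem statement18_general (F : StieltjesFunction ℝ)
    (hF1 : F 1 = 0)
    (C : ℝ) (hCheb : ∀ x : ℝ, 1 ≤ x → F x ≤ C * x / Real.log (x + 1))
    (q : ℕ → ℝ) (hq0 : q 0 = 1)
    (hq : ∀ j : ℕ, 1 ≤ j → IsLeast {x : ℝ | F x = (j : ℝ)} (q j))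
    {Ω : Type*} [MeasurableSpace Ω] (μ : Measure Ω) [IsProbabilityMeasure μ]
    (P : ℕ → Ω → ℝ) (hmeas : ∀ j, Measurable (P j))
    (hindep : iIndepFun (fun j : ℕ => P (j + 1)) μ)
    (hdist : ∀ j : ℕ, 1 ≤ j →
      Measure.map (P j) μ = F.measure.restrict (Set.Ioc (q (j - 1)) (q j)))
    (u₀ : ℝ) (hu₀pos : 0 < u₀) (hu₀ : Real.exp u₀ = 1 + u₀ + u₀ ^ 2) :
    ∀ t : ℝ, ∀ J : ℕ, 1 ≤ J →
      Real.log (|t| + 1) ≤ q J / Real.log (q J + 1) →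
      μ {ω : Ω |
          Real.sqrt 2 * max (Real.sqrt (8 * C)) (8 / u₀) *
            (Real.sqrt (q J) +
              Real.sqrt (q J * Real.log (|t| + 1) / Real.log (q J + 1))) ≤
          ‖(∑ j ∈ Finset.Icc 1 J, (P j ω : ℂ) ^ (-(t : ℂ) * Complex.I)) -
            ∫ u in Set.Ioc (1 : ℝ) (q J), (u : ℂ) ^ (-(t : ℂ) * Complex.I) ∂F.measure‖} ≤
        ENNReal.ofReal (4 / ((q J + 1) ^ 2 * (|t| + 1) ^ 2)) := by
  intro t J hJ hlog
  have hFq := StieltjesFunction.apply_eq_natCast_of_isLeast hF1 hq0 hq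
  have hq_mono : StrictMono q := strictMono_of_monotone_comp_eq_natCast F.mono hFq
  have hq_one : ∀ j, 1 ≤ q j := fun j => hq0 ▸ hq_mono.monotone j.zero_le
  have hdist' : ∀ i, μ.map (P (i + 1)) = F.measure.restrict (Ioc (q i) (q (i + 1))) :=
    fun i => by simpa using hdist (i + 1) (by omega)
  have hcentre : ∀ ω, (∑ j ∈ Finset.Icc 1 J, (P j ω : ℂ) ^ (-(t : ℂ) * Complex.I)) -
      ∫ u in Ioc (1 : ℝ) (q J), (u : ℂ) ^ (-(t : ℂ) * Complex.I) ∂F.measure =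
      ∑ i ∈ Finset.range J, ((P (i + 1) ω : ℂ) ^ (-(t : ℂ) * Complex.I) -
        ∫ ω', (P (i + 1) ω' : ℂ) ^ (-(t : ℂ) * Complex.I) ∂μ) := fun ω => by
    rw [← hq0, ← sum_cpow_sub_setIntegral_eq hq_mono.monotone (hq0 ▸ zero_le_one)
      (fun i => hmeas _) hdist', Finset.range_eq_Ico,
      Finset.sum_Ico_add' (fun j => (P j ω : ℂ) ^ (-(t : ℂ) * Complex.I)),
      ← Finset.Ico_add_one_right_eq_Icc, zero_add]
  have hbound : 4 * Real.exp (-(2 * Real.log (q J + 1) + 2 * Real.log (|t| + 1))) =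
      4 / ((q J + 1) ^ 2 * (|t| + 1) ^ 2) := by
    rw [Real.exp_neg, Real.exp_add, mul_comm 2, mul_comm 2, Real.exp_mul, Real.exp_mul,
      Real.exp_log (by linarith [hq_one J]), Real.exp_log (by positivity)]
    norm_num [div_eq_mul_inv]
  obtain ⟨l, hl0, hlu, hl⟩ := exists_chernoff_parameter hu₀pos (by exact_mod_cast hJ)
    (Real.log_pos (by linarith [hq_one J])) (Real.log_add_one_le_sqrt (by linarith [hq_one J]))
    (Real.log_nonneg (by linarith [abs_nonneg t])) hlog (hFq J ▸ hCheb (q J) (hq_one J))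
  simp only [hcentre, mul_assoc]
  refine (measure_norm_sum_sub_integral_ge_le_exp
    (hindep.comp (fun _ u => (u : ℂ) ^ (-(t : ℂ) * Complex.I)) fun _ => by fun_prop)
    (fun i => by fun_prop) (ae_norm_cpow_neg_mul_I_le_one (fun i => zero_le_one.trans (hq_one i))
      (fun i => (hmeas _).aemeasurable) hdist' t) hu₀ hl0 hlu _ _).trans ?_
  rw [← ENNReal.ofReal_ofNat 4, ← ENNReal.ofReal_mul zero_le_four, ← hbound]
  exact ENNReal.ofReal_le_ofReal (by gcongr; rw [Finset.card_range]; linarith)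

/-- Let `F_c` be continuous, non-decreasing, `F_c(1) = 0`,
`F_c(x) → ∞`, `F_c(x) ≤ C x/log(x+1)`. With `q 0 = 1`, `q j = min{x : F_c x = j}`, let
`P_j` (`j ≥ 1`) be independent random variables, `P_j` distributed according to
`dF_c` restricted to `(q_{j-1}, q_j]`. Let `u₀` be the positive root of
`e^u = 1+u+u²` and `D = max(√(8C), 8/u₀)`. Then for all `t` and `J ≥ 1` with
`x := q J` satisfying `x/log(x+1) ≥ log(|t|+1)`,
`P(|∑_{j≤J} P_j^{-it} - ∫_1^x u^{-it} dF_c(u)| ≥ √2 D (√x + √(x log(|t|+1)/log(x+1))))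
  ≤ 4/((x+1)²(|t|+1)²)`. -/
theorem statement18 (F : StieltjesFunction ℝ) (hFcont : Continuous F)
    (hF1 : F 1 = 0) (hFinfty : Tendsto F atTop atTop)
    (C : ℝ) (hCheb : ∀ x : ℝ, 1 ≤ x → F x ≤ C * x / Real.log (x + 1))
    (q : ℕ → ℝ) (hq0 : q 0 = 1)
    (hq : ∀ j : ℕ, 1 ≤ j → IsLeast {x : ℝ | F x = (j : ℝ)} (q j))
    {Ω : Type*} [MeasurableSpace Ω] (μ : Measure Ω) [IsProbabilityMeasure μ]
    (P : ℕ → Ω → ℝ) (hmeas : ∀ j, Measurable (P j))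
    (hindep : iIndepFun (fun j : ℕ => P (j + 1)) μ)
    (hdist : ∀ j : ℕ, 1 ≤ j →
      Measure.map (P j) μ = F.measure.restrict (Set.Ioc (q (j - 1)) (q j)))
    (u₀ : ℝ) (hu₀pos : 0 < u₀) (hu₀ : Real.exp u₀ = 1 + u₀ + u₀ ^ 2) :
    ∀ t : ℝ, ∀ J : ℕ, 1 ≤ J →
      Real.log (|t| + 1) ≤ q J / Real.log (q J + 1) →
      μ {ω : Ω |
          Real.sqrt 2 * max (Real.sqrt (8 * C)) (8 / u₀) *
            (Real.sqrt (q J) +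
              Real.sqrt (q J * Real.log (|t| + 1) / Real.log (q J + 1))) ≤
          ‖(∑ j ∈ Finset.Icc 1 J, (P j ω : ℂ) ^ (-(t : ℂ) * Complex.I)) -
            ∫ u in Set.Ioc (1 : ℝ) (q J), (u : ℂ) ^ (-(t : ℂ) * Complex.I) ∂F.measure‖} ≤
        ENNReal.ofReal (4 / ((q J + 1) ^ 2 * (|t| + 1) ^ 2)) :=
  statement18_general F hF1 C hCheb q hq0 hq μ P hmeas hindep hdist u₀ hu₀pos hu₀
end
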